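/- arXiv:0903.1716 — 9 statements merged into one kernel-verified Lean document; each statement's English description precedes it below -/
import Mathlib

section
/- A binary sequence a_0,...,a_{n-1} with entries in {+1,-1} satisfies |sum_{k=i}^{j} a_k| ≤ 2 for all 0 ≤ i ≤ j < n if and only if at least one of the following holds: (1) a_i = -a_{i+1} for all even i with 0 ≤ i ≤ n-2, or (2) a_i = -a_{i+1} for all odd i with 0 ≤ i ≤ n-2. -/
private lemma alt_endpoint (a : ℕ → ℤ) :
    ∀ d m, (∀ k, m ≤ k → k < m + 2 * d → a (k + 1) = -a k) → a (m + 2 * d) = a m := by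
  intro d
  induction d with
  | zero => intro m _; simp
  | succ d ih =>
    intro m h
    have h1 : a (m + 1) = -a m := h m le_rfl (by omega)
    have h2 : a (m + 2) = -a (m + 1) := h (m + 1) (by omega) (by omega)
    have h3 := ih (m + 2) (fun k hk hk2 => h k (by omega) (by omega))
    have e : m + 2 * (d + 1) = m + 2 + 2 * d := by ring
    rw [e, h3, h2, h1, neg_neg]

private lemma alt_sum (a : ℕ → ℤ) :
    ∀ d m, (∀ k, m ≤ k → k < m + 2 * d → a (k + 1) = -a k) →
      ∑ k ∈ Finset.Icc m (m + 2 * d), a k = a m := by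
  intro d
  induction d with
  | zero => intro m _; simp
  | succ d ih =>
    intro m h
    have e : m + 2 * (d + 1) = (m + 2 * d + 1) + 1 := by ring
    rw [e, Finset.sum_Icc_succ_top (by omega), Finset.sum_Icc_succ_top (by omega),
      ih m (fun k hk hk2 => h k hk (by omega))]
    have h1 : a (m + 2 * d + 1) = -a (m + 2 * d) := h (m + 2 * d) (by omega) (by omega)
    have h2 : a (m + 2 * d + 1 + 1) = -a (m + 2 * d + 1) := h (m + 2 * d + 1) (by omega) (by omega)
    rw [h2, h1]; ring

private lemma chg_of_alt (n r : ℕ) (hr : r < 2) (a : ℕ → ℤ)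
    (ha : ∀ i < n, a i = 1 ∨ a i = -1)
    (h : ∀ k, k % 2 = r → k + 1 < n → a (k + 1) = -a k) :
    ∀ d i, i + d < n →
      |∑ k ∈ Finset.Icc i (i + d), a k| ≤ 2 ∧
      ((i + d) % 2 ≠ r → |∑ k ∈ Finset.Icc i (i + d), a k| ≤ 1) := by
  intro d
  induction d using Nat.strong_induction_on with
  | _ d ih =>
    intro i hin
    rcases Nat.eq_zero_or_pos d with rfl | hd
    · simp only [Nat.add_zero, Finset.Icc_self, Finset.sum_singleton]
      have h1 : |a i| = 1 := by rcases ha i (by omega) with h1 | h1 <;> simp [h1]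
      exact ⟨by omega, fun _ => by omega⟩
    obtain ⟨e, rfl⟩ : ∃ e, d = e + 1 := ⟨d - 1, by omega⟩
    by_cases hpar : (i + (e + 1)) % 2 = r
    · -- last index has parity r: sum = (sum up to i+e) + a (i+e+1), with |sum up to i+e| ≤ 1
      have e1 : i + (e + 1) = (i + e) + 1 := by ring
      rw [e1, Finset.sum_Icc_succ_top (by omega)]
      have hprev := ih e (by omega) i (by omega)
      have hprev1 : |∑ k ∈ Finset.Icc i (i + e), a k| ≤ 1 := hprev.2 (by omega)
      have h1 : |a (i + e + 1)| = 1 := by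
        rcases ha (i + e + 1) (by omega) with h1 | h1 <;> simp [h1]
      constructor
      · have := abs_add_le (∑ k ∈ Finset.Icc i (i + e), a k) (a (i + e + 1))
        omega
      · intro hc; omega
    · rcases Nat.eq_zero_or_pos e with rfl | he
      · -- d = 1, and i % 2 = r, so the pair cancels
        have hi : i % 2 = r := by omega
        have h1 : a (i + 1) = -a i := h i hi (by omega)
        have e1 : i + 1 = i + 0 + 1 := by ring
        rw [e1, Finset.sum_Icc_succ_top (by omega)]
        simp only [Nat.add_zero, Finset.Icc_self, Finset.sum_singleton]
        rw [h1]
        simp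
      obtain ⟨f, rfl⟩ : ∃ f, e = f + 1 := ⟨e - 1, by omega⟩
      -- last two terms cancel since (i+f+1) % 2 = r
      have hi : (i + (f + 1)) % 2 = r := by omega
      have h1 : a (i + (f + 1) + 1) = -a (i + (f + 1)) := h _ hi (by omega)
      have e1 : i + (f + 1 + 1) = (i + (f + 1)) + 1 := by ring
      have e2 : i + (f + 1) = (i + f) + 1 := by ring
      rw [e1, Finset.sum_Icc_succ_top (by omega), h1, e2,
        Finset.sum_Icc_succ_top (by omega)]
      have hprev := ih f (by omega) i (by omega)
      have hs : ∑ k ∈ Finset.Icc i (i + f), a k + a (i + f + 1) + -a (i + f + 1)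
          = ∑ k ∈ Finset.Icc i (i + f), a k := by ring
      rw [hs]
      exact ⟨hprev.1, fun _ => hprev.2 (by omega)⟩

private lemma no_two_viol (n : ℕ) (a : ℕ → ℤ) (ha : ∀ i < n, a i = 1 ∨ a i = -1)
    (hchg : ∀ i j : ℕ, i ≤ j → j < n → |∑ k ∈ Finset.Icc i j, a k| ≤ 2) :
    ∀ d p, d % 2 = 1 → p + d + 1 < n → a p = a (p + 1) → a (p + d) = a (p + d + 1) → False := by
  intro d
  induction d using Nat.strong_induction_on with
  | _ d ih =>
    intro p hd hn hvp hvq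
    by_cases hmid : ∃ k, p < k ∧ k < p + d ∧ a k = a (k + 1)
    · obtain ⟨k, hk1, hk2, hk3⟩ := hmid
      rcases Nat.even_or_odd (k - p) with he | ho
      · -- recurse on [k, p+d]
        obtain ⟨t, ht⟩ := he
        refine ih (p + d - k) (by omega) k (by omega) (by omega) hk3 ?_
        have e : k + (p + d - k) = p + d := by omega
        rw [e]; exact hvq
      · obtain ⟨t, ht⟩ := ho
        refine ih (k - p) (by omega) p (by omega) (by omega) hvp ?_
        have e : p + (k - p) = k := by omega
        rw [e]; exact hk3
    · push_neg at hmid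
      have halt : ∀ k, p + 1 ≤ k → k < p + d → a (k + 1) = -a k := by
        intro k hk1 hk2
        have hne : a k ≠ a (k + 1) := hmid k (by omega) (by omega)
        rcases ha k (by omega) with h1 | h1 <;> rcases ha (k + 1) (by omega) with h2 | h2 <;>
          simp [h1, h2] at hne ⊢
      obtain ⟨t, rfl⟩ : ∃ t, d = 2 * t + 1 := ⟨d / 2, by omega⟩
      have halt' : ∀ k, p + 1 ≤ k → k < p + 1 + 2 * t → a (k + 1) = -a k :=
        fun k hk1 hk2 => halt k hk1 (by omega)
      have hsum : ∑ k ∈ Finset.Icc (p + 1) (p + 1 + 2 * t), a k = a (p + 1) :=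
        alt_sum a t (p + 1) halt'
      have hend : a (p + 1 + 2 * t) = a (p + 1) := alt_endpoint a t (p + 1) halt'
      -- total sum over [p, p + 2t + 2] equals 3 * a p
      have e1 : p + (2 * t + 1) = p + 1 + 2 * t := by ring
      have e2 : p + (2 * t + 1) + 1 = (p + 1 + 2 * t) + 1 := by ring
      have hb := hchg p (p + 1 + 2 * t + 1) (by omega) (by omega)
      have hsplit : ∑ k ∈ Finset.Icc p (p + 1 + 2 * t + 1), a k
          = a p + (∑ k ∈ Finset.Icc (p + 1) (p + 1 + 2 * t), a k + a (p + 1 + 2 * t + 1)) := by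
        rw [Finset.sum_Icc_succ_top (by omega),
          Finset.Icc_eq_cons_Ioc (by omega : p ≤ p + 1 + 2 * t), Finset.sum_cons,
          ← Finset.Icc_add_one_left_eq_Ioc]
        ring
      have hlastq : a (p + 1 + 2 * t + 1) = a p := by
        rw [← e2, ← hvq, e1, hend, ← hvp]
      rw [hsplit, hsum, hlastq, ← hvp] at hb
      have h3 : a p + (a p + a p) = 3 * a p := by ring
      rw [h3] at hb
      rcases ha p (by omega) with h1 | h1 <;> rw [h1] at hb <;> norm_num at hb

/-- A ±1 sequence `a_0, …, a_{n-1}` satisfies the charge constraint `CHG(2)`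
(all contiguous partial sums have absolute value at most 2) iff either
`a_i = -a_{i+1}` for all even `i ≤ n-2`, or `a_i = -a_{i+1}` for all odd `i ≤ n-2`. -/
theorem stmt0 (n : ℕ) (hn : 2 ≤ n) (a : ℕ → ℤ)
    (ha : ∀ i < n, a i = 1 ∨ a i = -1) :
    (∀ i j : ℕ, i ≤ j → j < n → |∑ k ∈ Finset.Icc i j, a k| ≤ 2) ↔
      ((∀ i : ℕ, Even i → i + 1 < n → a i = -a (i + 1)) ∨
       (∀ i : ℕ, Odd i → i + 1 < n → a i = -a (i + 1))) := by
  constructor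
  · intro hchg
    by_contra hc
    push_neg at hc
    obtain ⟨⟨p, hp, hpn, hpne⟩, ⟨q, hq, hqn, hqne⟩⟩ := hc
    have eqp : a p = a (p + 1) := by
      rcases ha p (by omega) with h1 | h1 <;> rcases ha (p + 1) (by omega) with h2 | h2 <;>
        simp [h1, h2] at hpne ⊢
    have eqq : a q = a (q + 1) := by
      rcases ha q (by omega) with h1 | h1 <;> rcases ha (q + 1) (by omega) with h2 | h2 <;>
        simp [h1, h2] at hqne ⊢
    have hp2 : p % 2 = 0 := Nat.even_iff.mp hp
    have hq2 : q % 2 = 1 := Nat.odd_iff.mp hq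
    rcases Nat.lt_or_ge p q with hlt | hge
    · refine no_two_viol n a ha hchg (q - p) p (by omega) (by omega) eqp ?_
      have e : p + (q - p) = q := by omega
      rw [e]; exact eqq
    · have hlt : q < p := by omega
      refine no_two_viol n a ha hchg (p - q) q (by omega) (by omega) eqq ?_
      have e : q + (p - q) = p := by omega
      rw [e]; exact eqp
  · rintro (h | h) i j hij hjn
    · have h' : ∀ k, k % 2 = 0 → k + 1 < n → a (k + 1) = -a k := by
        intro k hk hkn
        have := h k (Nat.even_iff.mpr hk) hkn
        linarith
      have hji : i + (j - i) = j := by omega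
      have := (chg_of_alt n 0 (by omega) a ha h' (j - i) i (by omega)).1
      rwa [hji] at this
    · have h' : ∀ k, k % 2 = 1 → k + 1 < n → a (k + 1) = -a k := by
        intro k hk hkn
        have := h k (Nat.odd_iff.mpr hk) hkn
        linarith
      have hji : i + (j - i) = j := by omega
      have := (chg_of_alt n 1 (by omega) a ha h' (j - i) i (by omega)).1
      rwa [hji] at this
end

section
/- Any binary word w_0,...,w_{n-1} ∈ {0,1}^n in which the number of 0's between any two consecutive 1's is odd satisfies: either w_j = 0 for all even j ∈ [n], or w_j = 0 for all odd j ∈ [n]. Consequently the number of such words of length n is at most 2^{⌈n/2⌉} + 2^{⌊n/2⌋}. -/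
/-!
Two consecutive 1's of an ODD word are separated by an odd number of 0's, so their positions
have the same parity; chaining through the intermediate 1's, all 1's of the word sit at positions
of one parity. Hence an ODD word vanishes on the even or on the odd positions, and the words
vanishing on a set of positions are counted by the free choices on the remaining positions.
-/

open Finset

def OddWord {n : ℕ} (w : Fin n → Bool) : Prop :=
  ∀ i j : Fin n, i < j → w i = true → w j = true →
    (∀ k : Fin n, i < k → k < j → w k = false) → Odd ((j : ℕ) - (i : ℕ) - 1)

namespace OddWord

variable {n : ℕ} {w : Fin n → Bool}

theorem mod_two_eq_of_lt (hw : OddWord w) {i j : Fin n} (hij : i < j) (hi : w i = true)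
    (hj : w j = true) : (i : ℕ) % 2 = (j : ℕ) % 2 := by
  induction h : (j : ℕ) - i using Nat.strong_induction_on generalizing i j with
  | _ d ih =>
    have hij' : (i : ℕ) < j := hij
    by_cases hgap : ∀ k : Fin n, i < k → k < j → w k = false
    · obtain ⟨m, hm⟩ := hw i j hij hi hj hgap
      omega
    · push Not at hgap
      obtain ⟨k, hik, hkj, hk⟩ := hgap
      rw [ne_eq, Bool.not_eq_false] at hk
      have hik' : (i : ℕ) < k := hik
      have hkj' : (k : ℕ) < j := hkj
      rw [ih _ (by omega) hik hi hk rfl, ih _ (by omega) hkj hk hj rfl]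

theorem mod_two_eq (hw : OddWord w) {i j : Fin n} (hi : w i = true) (hj : w j = true) :
    (i : ℕ) % 2 = (j : ℕ) % 2 := by
  rcases lt_trichotomy i j with hij | rfl | hji
  · exact hw.mod_two_eq_of_lt hij hi hj
  · rfl
  · exact (hw.mod_two_eq_of_lt hji hj hi).symm

theorem forall_even_or_forall_odd (hw : OddWord w) :
    (∀ j : Fin n, Even (j : ℕ) → w j = false) ∨ (∀ j : Fin n, Odd (j : ℕ) → w j = false) := by
  by_cases h : ∃ i : Fin n, Even (i : ℕ) ∧ w i = true
  · obtain ⟨i, hi_even, hi⟩ := h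
    refine Or.inr fun j hj_odd => Bool.eq_false_iff.2 fun hj => ?_
    have hparity := hw.mod_two_eq hi hj
    rw [Nat.even_iff.1 hi_even, Nat.odd_iff.1 hj_odd] at hparity
    exact zero_ne_one hparity
  · push Not at h
    exact Or.inl fun j hj => Bool.eq_false_iff.2 (h j hj)

end OddWord

theorem Fin.card_filter_val_odd (n : ℕ) : #{i : Fin n | Odd (i : ℕ)} = n / 2 := by
  rw [← card_map Fin.valEmbedding, map_filter', Fin.map_valEmbedding_univ, Nat.Iio_eq_range,
    ← Nat.card_multiples]
  congr 1
  ext e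
  simp +contextual [Fin.exists_iff, ← even_iff_two_dvd, Nat.even_add_one]

theorem Fin.card_filter_val_not_odd (n : ℕ) : #{i : Fin n | ¬ Odd (i : ℕ)} = (n + 1) / 2 := by
  have hsplit := card_filter_add_card_filter_not (s := univ) fun i : Fin n => Odd (i : ℕ)
  rw [Fin.card_filter_val_odd, card_univ, Fintype.card_fin] at hsplit
  omega

theorem Fin.card_filter_val_not_even (n : ℕ) : #{i : Fin n | ¬ Even (i : ℕ)} = n / 2 := by
  simpa using Fin.card_filter_val_odd n

theorem card_filter_forall_imp_eq_false {ι : Type*} [Fintype ι] [DecidableEq ι] (p : ι → Prop)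
    [DecidablePred p] :
    #{w : ι → Bool | ∀ i, p i → w i = false} = 2 ^ #{i | ¬ p i} := by
  have hpiFinset : ({w : ι → Bool | ∀ i, p i → w i = false} : Finset _) =
      Fintype.piFinset fun i => if p i then {false} else univ := by
    ext w; simp only [mem_filter, mem_univ, true_and, Fintype.mem_piFinset]
    refine forall_congr' fun i => ?_
    split_ifs with h <;> simp [h]
  rw [hpiFinset, Fintype.card_piFinset]
  simp [apply_ite card, prod_ite]

/-- Every word in the ODD constraint has all its even-position entries equal to `0`,
or all its odd-position entries equal to `0`; consequently the number of words of
length `n` in ODD is at most `2^⌈n/2⌉ + 2^⌊n/2⌋`. -/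
theorem stmt2 (n : ℕ) :
    (∀ w : Fin n → Bool, OddWord w →
      ((∀ j : Fin n, Even (j : ℕ) → w j = false) ∨
       (∀ j : Fin n, Odd (j : ℕ) → w j = false))) ∧
    Nat.card {w : Fin n → Bool // OddWord w} ≤ 2 ^ ((n + 1) / 2) + 2 ^ (n / 2) := by
  refine ⟨fun w hw => hw.forall_even_or_forall_odd, ?_⟩
  calc Nat.card {w : Fin n → Bool // OddWord w}
      ≤ Nat.card (↑(univ.filter (fun w : Fin n → Bool => ∀ j : Fin n, Odd (j : ℕ) → w j = false) ∪
          univ.filter fun w : Fin n → Bool => ∀ j : Fin n, Even (j : ℕ) → w j = false) :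
            Set (Fin n → Bool)) :=
        Nat.card_mono (Set.toFinite _) fun w hw => by
          simpa [or_comm] using OddWord.forall_even_or_forall_odd hw
    _ ≤ _ := (Nat.card_eq_finsetCard _).trans_le (card_union_le _ _)
    _ = 2 ^ ((n + 1) / 2) + 2 ^ (n / 2) := by
        rw [← Fin.card_filter_val_not_odd, ← Fin.card_filter_val_not_even]
        -- `convert` reconciles `Nat.decidableForallFin` with `Fintype.decidableForallFintype`.
        congr 1 <;> convert card_filter_forall_imp_eq_false _
end

section
/- The number of binary words of length n belonging to the ODD constraint is at most 2^{⌈n/2⌉} + 2^{⌊n/2⌋}. -/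
lemma oddWord_same_parity {n : ℕ} {w : Fin n → Bool} (hw : OddWord w) :
    ∀ i j : Fin n, i < j → w i = true → w j = true → (i : ℕ) % 2 = (j : ℕ) % 2 := by
  classical
  have H : ∀ d : ℕ, ∀ i j : Fin n, (j : ℕ) - (i : ℕ) ≤ d → i < j → w i = true →
      w j = true → (i : ℕ) % 2 = (j : ℕ) % 2 := by
    intro d
    induction d with
    | zero =>
      intro i j hle hij _ _
      have := Fin.lt_def.mp hij
      omega
    | succ d ih =>
      intro i j hle hij hi hj
      have hij' := Fin.lt_def.mp hij
      by_cases hk : ∃ k : Fin n, i < k ∧ k < j ∧ w k = true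
      · obtain ⟨k, h1, h2, h3⟩ := hk
        have hik := Fin.lt_def.mp h1
        have hkj := Fin.lt_def.mp h2
        have e1 := ih i k (by omega) h1 hi h3
        have e2 := ih k j (by omega) h2 h3 hj
        omega
      · push_neg at hk
        have hodd := hw i j hij hi hj (fun k hk1 hk2 => by
          simpa using hk k hk1 hk2)
        obtain ⟨c, hc⟩ := hodd
        omega
  exact fun i j => H ((j : ℕ) - (i : ℕ)) i j le_rfl

lemma oddWord_dichotomy {n : ℕ} {w : Fin n → Bool} (hw : OddWord w) :
    (∀ i : Fin n, w i = true → (i : ℕ) % 2 = 0) ∨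
    (∀ i : Fin n, w i = true → (i : ℕ) % 2 = 1) := by
  classical
  by_cases h : ∃ i0 : Fin n, w i0 = true
  · obtain ⟨i0, hi0⟩ := h
    have key : ∀ i : Fin n, w i = true → (i : ℕ) % 2 = (i0 : ℕ) % 2 := by
      intro i hi
      rcases lt_trichotomy i i0 with h1 | h1 | h1
      · exact oddWord_same_parity hw i i0 h1 hi hi0
      · rw [h1]
      · exact (oddWord_same_parity hw i0 i h1 hi0 hi).symm
    rcases Nat.mod_two_eq_zero_or_one (i0 : ℕ) with hp | hp
    · left; intro i hi; rw [key i hi, hp]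
    · right; intro i hi; rw [key i hi, hp]
  · push_neg at h
    left
    intro i hi
    exact absurd hi (h i)

/-- The number of binary words of length `n` in the ODD constraint is at most
`2^⌈n/2⌉ + 2^⌊n/2⌋`. -/
theorem stmt3 (n : ℕ) :
    Nat.card {w : Fin n → Bool // OddWord w} ≤ 2 ^ ((n + 1) / 2) + 2 ^ (n / 2) := by
  classical
  set A : Finset (Fin n → Bool) :=
    Finset.univ.filter (fun w => ∀ i : Fin n, w i = true → (i : ℕ) % 2 = 0) with hAdef
  set B : Finset (Fin n → Bool) :=
    Finset.univ.filter (fun w => ∀ i : Fin n, w i = true → (i : ℕ) % 2 = 1) with hBdef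
  have hA : A.card ≤ 2 ^ ((n + 1) / 2) := by
    have hmaps : ∀ w ∈ A,
        (fun k : Fin ((n + 1) / 2) => w ⟨2 * (k : ℕ), by have := k.isLt; omega⟩) ∈
          (Finset.univ : Finset (Fin ((n + 1) / 2) → Bool)) := fun _ _ => Finset.mem_univ _
    have hinj : Set.InjOn
        (fun w : Fin n → Bool =>
          (fun k : Fin ((n + 1) / 2) => w ⟨2 * (k : ℕ), by have := k.isLt; omega⟩)) A := by
      intro w hw w' hw' h
      rw [hAdef, Finset.mem_coe, Finset.mem_filter] at hw hw'
      funext i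
      by_cases hi : (i : ℕ) % 2 = 0
      · have hlt : (i : ℕ) / 2 < (n + 1) / 2 := by have := i.isLt; omega
        have heq := congrFun h ⟨(i : ℕ) / 2, hlt⟩
        simp only at heq
        have hfe : (⟨2 * ((i : ℕ) / 2), by have := i.isLt; omega⟩ : Fin n) = i :=
          Fin.ext (show _ = (i:ℕ) by simp; omega)
        rwa [hfe] at heq
      · have h1 : w i = false := by
          cases hwi : w i with
          | false => rfl
          | true => exact absurd (hw.2 i hwi) hi
        have h2 : w' i = false := by
          cases hwi : w' i with
          | false => rfl
          | true => exact absurd (hw'.2 i hwi) hi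
        rw [h1, h2]
    calc A.card ≤ (Finset.univ : Finset (Fin ((n + 1) / 2) → Bool)).card :=
          Finset.card_le_card_of_injOn _ hmaps hinj
      _ = 2 ^ ((n + 1) / 2) := by simp
  have hB : B.card ≤ 2 ^ (n / 2) := by
    have hmaps : ∀ w ∈ B,
        (fun k : Fin (n / 2) => w ⟨2 * (k : ℕ) + 1, by have := k.isLt; omega⟩) ∈
          (Finset.univ : Finset (Fin (n / 2) → Bool)) := fun _ _ => Finset.mem_univ _
    have hinj : Set.InjOn
        (fun w : Fin n → Bool =>
          (fun k : Fin (n / 2) => w ⟨2 * (k : ℕ) + 1, by have := k.isLt; omega⟩)) B := by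
      intro w hw w' hw' h
      rw [hBdef, Finset.mem_coe, Finset.mem_filter] at hw hw'
      funext i
      by_cases hi : (i : ℕ) % 2 = 1
      · have hlt : (i : ℕ) / 2 < n / 2 := by have := i.isLt; omega
        have heq := congrFun h ⟨(i : ℕ) / 2, hlt⟩
        simp only at heq
        have hfe : (⟨2 * ((i : ℕ) / 2) + 1, by have := i.isLt; omega⟩ : Fin n) = i :=
          Fin.ext (show _ = (i:ℕ) by simp; omega)
        rwa [hfe] at heq
      · have h1 : w i = false := by
          cases hwi : w i with
          | false => rfl
          | true => exact absurd (hw.2 i hwi) hi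
        have h2 : w' i = false := by
          cases hwi : w' i with
          | false => rfl
          | true => exact absurd (hw'.2 i hwi) hi
        rw [h1, h2]
    calc B.card ≤ (Finset.univ : Finset (Fin (n / 2) → Bool)).card :=
          Finset.card_le_card_of_injOn _ hmaps hinj
      _ = 2 ^ (n / 2) := by simp
  have hsub : Finset.univ.filter (fun w : Fin n → Bool => OddWord w) ⊆ A ∪ B := by
    intro w hw
    rw [Finset.mem_filter] at hw
    rcases oddWord_dichotomy hw.2 with h | h
    · exact Finset.mem_union_left _ (by rw [hAdef, Finset.mem_filter]; exact ⟨Finset.mem_univ _, h⟩)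
    · exact Finset.mem_union_right _ (by rw [hBdef, Finset.mem_filter]; exact ⟨Finset.mem_univ _, h⟩)
  have hcard : Nat.card {w : Fin n → Bool // OddWord w} =
      (Finset.univ.filter (fun w : Fin n → Bool => OddWord w)).card := by
    rw [Nat.card_eq_fintype_card, Fintype.card_subtype]
  rw [hcard]
  calc (Finset.univ.filter (fun w : Fin n → Bool => OddWord w)).card
      ≤ (A ∪ B).card := Finset.card_le_card hsub
    _ ≤ A.card + B.card := Finset.card_union_le _ _
    _ ≤ 2 ^ ((n + 1) / 2) + 2 ^ (n / 2) := Nat.add_le_add hA hB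
end

section
/- For every positive integer n, the number of binary 2n × 2n arrays in which every row and every column satisfies the ODD constraint is at least 2^{(2n)^2 / 2} = 2^{2n^2}. -/
/-- Fill cells with odd coordinate sum from `f`, others with `false`. -/
def gam (n : ℕ) (f : Fin (2 * n) → Fin n → Bool) : Fin (2 * n) → Fin (2 * n) → Bool :=
  fun i j =>
    if ((i : ℕ) + (j : ℕ)) % 2 = 1 then
      f i ⟨(j : ℕ) / 2, by have := j.isLt; omega⟩
    else false

lemma gam_oddWord (n : ℕ) (r : ℕ)
    (w : Fin (2 * n) → Bool)
    (hw : ∀ j, w j = true → (r + (j : ℕ)) % 2 = 1) : OddWord w := by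
  intro a b hab ha hb _
  have h1 := hw a ha
  have h2 := hw b hb
  have hab' : (a : ℕ) < (b : ℕ) := hab
  exact ⟨((b : ℕ) - (a : ℕ) - 2) / 2, by omega⟩

/-- For every positive `n`, the number of binary `2n × 2n` arrays all of whose rows
and columns satisfy the ODD constraint is at least `2^(2n²)`. -/
theorem stmt4 (n : ℕ) (hn : 0 < n) :
    2 ^ (2 * n ^ 2) ≤
      Nat.card {Γ : Fin (2 * n) → Fin (2 * n) → Bool //
        (∀ i : Fin (2 * n), OddWord (fun j => Γ i j)) ∧
        (∀ j : Fin (2 * n), OddWord (fun i => Γ i j))} := by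
  set S := {Γ : Fin (2 * n) → Fin (2 * n) → Bool //
        (∀ i : Fin (2 * n), OddWord (fun j => Γ i j)) ∧
        (∀ j : Fin (2 * n), OddWord (fun i => Γ i j))}
  have mem : ∀ f, (∀ i : Fin (2 * n), OddWord (fun j => gam n f i j)) ∧
      (∀ j : Fin (2 * n), OddWord (fun i => gam n f i j)) := by
    intro f
    constructor
    · intro i
      apply gam_oddWord n (i : ℕ)
      intro j hj
      simp only [gam] at hj
      by_contra h
      simp [h] at hj
    · intro j
      apply gam_oddWord n (j : ℕ)
      intro i hi
      simp only [gam] at hi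
      by_contra h
      have h' : ((i : ℕ) + (j : ℕ)) % 2 ≠ 1 := by omega
      simp [h'] at hi
  have hinj : Function.Injective (fun f => (⟨gam n f, mem f⟩ : S)) := by
    intro f f' h
    have h' : gam n f = gam n f' := congrArg Subtype.val h
    funext i k
    have hk := k.isLt
    have hj : 2 * (k : ℕ) + (1 - (i : ℕ) % 2) < 2 * n := by omega
    have := congrFun (congrFun h' i) ⟨2 * (k : ℕ) + (1 - (i : ℕ) % 2), hj⟩
    simp only [gam] at this
    have hpar : ((i : ℕ) + (2 * (k : ℕ) + (1 - (i : ℕ) % 2))) % 2 = 1 := by omega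
    rw [if_pos hpar, if_pos hpar] at this
    have hdiv : (2 * (k : ℕ) + (1 - (i : ℕ) % 2)) / 2 = (k : ℕ) := by omega
    simpa [hdiv, Fin.ext_iff] using this
  have hcard : 2 ^ (2 * n ^ 2) = Nat.card (Fin (2 * n) → Fin n → Bool) := by
    simp [Nat.card_eq_fintype_card, ← pow_mul]
    ring_nf
  rw [hcard]
  exact Nat.card_le_card_of_injective _ hinj
end

section
/- The capacity of the D-dimensional isotropic axial product of the ODD constraint equals 1/2, for all positive integers D. In particular, lim_{n→∞} (log_2 N_D(n)) / n^D = 1/2, where N_D(n) is the number of binary n×n×...×n (D-dimensional) arrays all of whose axis-parallel rows satisfy ODD. -/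
/-!
A word is ODD iff all of its 1's sit at positions of one parity (split a pair of 1's at any 1
between them; an adjacent pair is exactly the defining condition). Hence every array supported on
the cells of even coordinate sum is admissible, which gives at least `2 ^ (⌊n/2⌋ n^(D-1))` arrays.
Conversely an admissible array is determined by its `n^(D-1)` rows in the first direction, each an
ODD word, and there are at most `2 · 2^⌈n/2⌉` ODD words of length `n`. So `log₂ N_D(n) / n^D` is
squeezed between `1/2 - 1/(2n)` and `1/2 + 3/(2n)`.
-/

open Filter

/-- `OddCube D n` is the number of binary `D`-dimensional `n × ⋯ × n` arrays all of
whose axis-parallel rows satisfy the ODD constraint. -/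
noncomputable def OddCube (D n : ℕ) : ℕ :=
  Nat.card {Γ : (Fin D → Fin n) → Bool //
    ∀ (i : Fin D) (x : Fin D → Fin n),
      OddWord (fun t : Fin n => Γ (Function.update x i t))}

def boolFunSupportedInEquiv {α : Type*} (s : Set α) [DecidablePred (· ∈ s)] :
    {f : α → Bool // ∀ a, f a = true → a ∈ s} ≃ (s → Bool) where
  toFun f a := f.1 a
  invFun g := ⟨fun a => if h : a ∈ s then g ⟨a, h⟩ else false, fun a ha => by
    by_contra h
    simp [h] at ha⟩
  left_inv f := by
    ext a
    by_cases h : a ∈ s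
    · simp [h]
    · simpa [h] using mt (f.2 a) h
  right_inv g := by
    ext a
    simp

lemma card_boolFun_supportedIn {α : Type*} [Finite α] (s : Set α) :
    Nat.card {f : α → Bool // ∀ a, f a = true → a ∈ s} = 2 ^ Nat.card s := by
  classical
  rw [Nat.card_congr (boolFunSupportedInEquiv s), Nat.card_fun, Nat.card_eq_fintype_card,
    Fintype.card_bool]

lemma oddWord_iff_mod_two_eq {n : ℕ} (w : Fin n → Bool) :
    OddWord w ↔ ∀ i j, w i = true → w j = true → (i : ℕ) % 2 = (j : ℕ) % 2 := by
  refine ⟨fun hw => ?_, fun h i j hij hi hj _ => ?_⟩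
  · have key : ∀ g : ℕ, ∀ i j : Fin n, (j : ℕ) = i + g → i < j → w i = true → w j = true →
        (i : ℕ) % 2 = (j : ℕ) % 2 := by
      intro g
      induction g using Nat.strong_induction_on with
      | _ g ih =>
        intro i j hg hij hi hj
        by_cases hk : ∃ k, i < k ∧ k < j ∧ w k = true
        · obtain ⟨k, hik, hkj, hk⟩ := hk
          have hik' : (i : ℕ) < k := hik
          have hkj' : (k : ℕ) < j := hkj
          rw [ih (k - i) (by omega) i k (by omega) hik hi hk,
            ih (j - k) (by omega) k j (by omega) hkj hk hj]
        · push Not at hk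
          have hodd := hw i j hij hi hj fun k hik hkj => by simpa using hk k hik hkj
          rw [Nat.odd_iff] at hodd
          omega
    intro i j hi hj
    rcases lt_trichotomy i j with hij | rfl | hij
    · exact key (j - i) i j (by omega) hij hi hj
    · rfl
    · exact (key (i - j) j i (by omega) hij hj hi).symm
  · have hij' : (i : ℕ) < j := hij
    have := h i j hi hj
    rw [Nat.odd_iff]
    omega

lemma OddWord.ones_even_or_ones_odd {n : ℕ} {w : Fin n → Bool} (hw : OddWord w) :
    (∀ i, w i = true → (i : ℕ) % 2 = 0) ∨ (∀ i, w i = true → (i : ℕ) % 2 = 1) := by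
  by_cases h : ∃ i, w i = true ∧ (i : ℕ) % 2 = 1
  · obtain ⟨i, hi, hi1⟩ := h
    exact Or.inr fun j hj => ((oddWord_iff_mod_two_eq w).1 hw j i hj hi).trans hi1
  · push Not at h
    exact Or.inl fun i hi => by have := h i hi; omega

lemma card_fin_mod_two_eq_le (n p : ℕ) :
    Nat.card {i : Fin n | (i : ℕ) % 2 = p} ≤ (n + 1) / 2 := by
  have hinj : Function.Injective fun i : {i : Fin n | (i : ℕ) % 2 = p} =>
      (⟨i.1 / 2, by omega⟩ : Fin ((n + 1) / 2)) := by
    rintro ⟨i, hi : (i : ℕ) % 2 = p⟩ ⟨j, hj : (j : ℕ) % 2 = p⟩ hij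
    simp only [Fin.mk.injEq] at hij
    have : (i : ℕ) = j := by omega
    exact Subtype.ext (Fin.ext this)
  simpa using Nat.card_le_card_of_injective _ hinj

lemma card_oddWord_le (n : ℕ) :
    Nat.card {w : Fin n → Bool // OddWord w} ≤ 2 * 2 ^ ((n + 1) / 2) := by
  let wordsIn (p : ℕ) : Set (Fin n → Bool) :=
    {w | ∀ i, w i = true → i ∈ {i : Fin n | (i : ℕ) % 2 = p}}
  have hcard (p : ℕ) : (wordsIn p).ncard ≤ 2 ^ ((n + 1) / 2) := by
    rw [← Nat.card_coe_set_eq]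
    exact (card_boolFun_supportedIn _).trans_le
      (Nat.pow_le_pow_right two_pos (card_fin_mod_two_eq_le n p))
  calc Nat.card {w : Fin n → Bool // OddWord w} = {w : Fin n → Bool | OddWord w}.ncard := rfl
    _ ≤ (wordsIn 0 ∪ wordsIn 1).ncard := Set.ncard_le_ncard fun w hw => hw.ones_even_or_ones_odd
    _ ≤ (wordsIn 0).ncard + (wordsIn 1).ncard := Set.ncard_union_le _ _
    _ ≤ 2 * 2 ^ ((n + 1) / 2) := by linarith [hcard 0, hcard 1]

def evenCells (D n : ℕ) : Set (Fin D → Fin n) := {x | (∑ j, (x j : ℕ)) % 2 = 0}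

lemma sum_val_update_add {D n : ℕ} (x : Fin D → Fin n) (i : Fin D) (t : Fin n) :
    ∑ j, (Function.update x i t j : ℕ) + x i = ∑ j, (x j : ℕ) + t := by
  have hcompl : ∑ j ∈ {i}ᶜ, (Function.update x i t j : ℕ) = ∑ j ∈ {i}ᶜ, (x j : ℕ) :=
    Finset.sum_congr rfl fun j hj => by rw [Function.update_of_ne (by simpa using hj)]
  rw [Fintype.sum_eq_add_sum_compl i, Fintype.sum_eq_add_sum_compl i (fun j => (x j : ℕ)),
    Function.update_self, hcompl]
  ring

lemma oddWord_row_of_supportedIn_evenCells {D n : ℕ} {Γ : (Fin D → Fin n) → Bool}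
    (hΓ : ∀ x, Γ x = true → x ∈ evenCells D n) (i : Fin D) (x : Fin D → Fin n) :
    OddWord fun t => Γ (Function.update x i t) := by
  rw [oddWord_iff_mod_two_eq]
  intro t₁ t₂ h₁ h₂
  have e₁ : _ % 2 = 0 := hΓ _ h₁
  have e₂ : _ % 2 = 0 := hΓ _ h₂
  have := sum_val_update_add x i t₁
  have := sum_val_update_add x i t₂
  omega

lemma two_pow_card_evenCells_le_oddCube (D n : ℕ) :
    2 ^ Nat.card (evenCells D n) ≤ OddCube D n := by
  rw [← card_boolFun_supportedIn]
  exact Nat.card_le_card_of_injective _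
    (Subtype.impEmbedding _ _ fun _ hΓ => oddWord_row_of_supportedIn_evenCells hΓ).injective

lemma card_evenCells_ge (d n : ℕ) : n / 2 * n ^ d ≤ Nat.card (evenCells (d + 1) n) := by
  -- the first coordinate `2k` or `2k + 1` fixes the parity of the coordinate sum
  let f (p : Fin (n / 2) × (Fin d → Fin n)) : evenCells (d + 1) n :=
    ⟨Fin.cons ⟨2 * p.1 + (∑ j, (p.2 j : ℕ)) % 2, by omega⟩ p.2, by
      simp only [evenCells, Set.mem_ofPred_eq, Fin.sum_univ_succ, Fin.cons_zero, Fin.cons_succ]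
      omega⟩
  have hf : Function.Injective f := by
    rintro ⟨k, y⟩ ⟨k', y'⟩ h
    have h' : (Fin.cons _ y : Fin (d + 1) → Fin n) = Fin.cons _ y' := congrArg Subtype.val h
    obtain ⟨hk, rfl⟩ := Fin.cons_inj.1 h'
    rw [Fin.mk.injEq] at hk
    simp only [Prod.mk.injEq, and_true]
    ext
    dsimp only at hk
    omega
  simpa [Nat.card_eq_fintype_card] using Nat.card_le_card_of_injective f hf

lemma two_pow_le_oddCube (d n : ℕ) : 2 ^ (n / 2 * n ^ d) ≤ OddCube (d + 1) n :=
  (Nat.pow_le_pow_right two_pos (card_evenCells_ge d n)).trans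
    (two_pow_card_evenCells_le_oddCube _ _)

lemma oddCube_le_card_oddWord_pow (d n : ℕ) :
    OddCube (d + 1) n ≤ Nat.card {w : Fin n → Bool // OddWord w} ^ n ^ d := by
  let rows (Γ : {Γ : (Fin (d + 1) → Fin n) → Bool // ∀ i x,
      OddWord fun t : Fin n => Γ (Function.update x i t)}) (y : Fin d → Fin n) :
      {w : Fin n → Bool // OddWord w} :=
    -- `OddWord` first quantifies over a position `t`, which serves as base point of the row
    ⟨fun t => Γ.1 (Fin.cons t y), fun t => by
      simpa only [Fin.update_cons_zero] using Γ.2 0 (Fin.cons t y) t⟩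
  have hrows : Function.Injective rows := by
    intro Γ Γ' h
    ext x
    simpa [rows] using congrFun (congrArg Subtype.val (congrFun h (Fin.tail x))) (x 0)
  simpa [OddCube, Nat.card_fun] using Nat.card_le_card_of_injective rows hrows

lemma oddCube_le_two_pow (d n : ℕ) : OddCube (d + 1) n ≤ 2 ^ (((n + 1) / 2 + 1) * n ^ d) :=
  calc OddCube (d + 1) n ≤ Nat.card {w : Fin n → Bool // OddWord w} ^ n ^ d :=
        oddCube_le_card_oddWord_pow d n
    _ ≤ (2 * 2 ^ ((n + 1) / 2)) ^ n ^ d := Nat.pow_le_pow_left (card_oddWord_le n) _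
    _ = 2 ^ (((n + 1) / 2 + 1) * n ^ d) := by rw [← pow_succ', pow_mul]

lemma natCast_le_logb_two {k N : ℕ} (h : 2 ^ k ≤ N) : (k : ℝ) ≤ Real.logb 2 N := by
  rw [Real.le_logb_iff_rpow_le one_lt_two (by exact_mod_cast (Nat.two_pow_pos k).trans_le h),
    Real.rpow_natCast]
  exact_mod_cast h

lemma logb_two_le_natCast {k N : ℕ} (h : N ≤ 2 ^ k) : Real.logb 2 N ≤ k := by
  rcases N.eq_zero_or_pos with rfl | hN
  · simp
  rw [Real.logb_le_iff_le_rpow one_lt_two (by exact_mod_cast hN), Real.rpow_natCast]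
  exact_mod_cast h

lemma le_logb_oddCube (d n : ℕ) :
    ((n : ℝ) - 1) / 2 * n ^ d ≤ Real.logb 2 (OddCube (d + 1) n) := by
  have hn : ((n : ℝ) - 1) / 2 ≤ (n / 2 : ℕ) := by
    have : (n : ℝ) ≤ 2 * (n / 2 : ℕ) + 1 := by exact_mod_cast (by omega : n ≤ 2 * (n / 2) + 1)
    linarith
  calc ((n : ℝ) - 1) / 2 * n ^ d ≤ (n / 2 * n ^ d : ℕ) := by push_cast; gcongr
    _ ≤ Real.logb 2 (OddCube (d + 1) n) := natCast_le_logb_two (two_pow_le_oddCube d n)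

lemma logb_oddCube_le (d n : ℕ) :
    Real.logb 2 (OddCube (d + 1) n) ≤ ((n : ℝ) + 3) / 2 * n ^ d := by
  have hn : ((n + 1) / 2 : ℕ) + 1 ≤ ((n : ℝ) + 3) / 2 := by
    have : 2 * ((n + 1) / 2 : ℕ) ≤ (n : ℝ) + 1 := by
      exact_mod_cast (by omega : 2 * ((n + 1) / 2) ≤ n + 1)
    linarith
  calc Real.logb 2 (OddCube (d + 1) n) ≤ (((n + 1) / 2 + 1) * n ^ d : ℕ) :=
        logb_two_le_natCast (oddCube_le_two_pow d n)
    _ ≤ ((n : ℝ) + 3) / 2 * n ^ d := by push_cast; gcongr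

/-- The capacity of the `D`-dimensional isotropic axial product of the ODD
constraint equals `1/2`: `lim_{n→∞} log₂(OddCube D n) / n^D = 1/2`. -/
theorem stmt6 (D : ℕ) (hD : 0 < D) :
    Tendsto (fun n : ℕ => Real.logb 2 (OddCube D n) / (n : ℝ) ^ D)
      atTop (nhds (1 / 2)) := by
  obtain ⟨d, rfl⟩ : ∃ d, D = d + 1 := ⟨D - 1, by omega⟩
  have hlim (c : ℝ) : Tendsto (fun n : ℕ => 1 / 2 + c / n) atTop (nhds (1 / 2)) := by
    simpa using tendsto_const_nhds.add (tendsto_const_div_atTop_nhds_zero_nat c)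
  refine tendsto_of_tendsto_of_tendsto_of_le_of_le' (hlim (-1 / 2)) (hlim (3 / 2)) ?_ ?_ <;>
    filter_upwards [eventually_gt_atTop 0] with n hn
  · rw [le_div_iff₀ (by positivity)]
    calc (1 / 2 + -1 / 2 / n) * (n : ℝ) ^ (d + 1) = ((n : ℝ) - 1) / 2 * n ^ d := by
          field_simp; ring
      _ ≤ _ := le_logb_oddCube d n
  · rw [div_le_iff₀ (by positivity)]
    calc Real.logb 2 (OddCube (d + 1) n) ≤ ((n : ℝ) + 3) / 2 * n ^ d := logb_oddCube_le d n
      _ = (1 / 2 + 3 / 2 / n) * (n : ℝ) ^ (d + 1) := by field_simp; ring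
end

section
/- The capacity of the 2-dimensional isotropic axial product of CHG(2) equals 1/4: lim_{n→∞} (log_2 M(n))/n^2 = 1/4, where M(n) is the number of arrays in {+1,-1}^{n×n} such that every row and every column a_0,...,a_{n-1} satisfies |sum_{k=i}^{j} a_k| ≤ 2 for all 0 ≤ i ≤ j < n. -/
open Filter

/-- A word over `{+1,-1}` satisfies `CHG(b)` when all of its contiguous partial sums
have absolute value at most `b`. -/
def ChgWord (b : ℤ) {n : ℕ} (a : Fin n → ℤ) : Prop :=
  ∀ i j : Fin n, i ≤ j → |∑ k ∈ Finset.Icc i j, a k| ≤ b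

/-- `ChgSquare n` is the number of `n × n` arrays over `{+1,-1}` all of whose rows
and columns satisfy `CHG(2)`. -/
noncomputable def ChgSquare (n : ℕ) : ℕ :=
  Nat.card {Γ : Fin n → Fin n → ℤ //
    (∀ i j : Fin n, Γ i j = 1 ∨ Γ i j = -1) ∧
    (∀ i : Fin n, ChgWord 2 (fun j => Γ i j)) ∧
    (∀ j : Fin n, ChgWord 2 (fun i => Γ i j))}

/-!
A `±1` word is `CHG(2)` iff its walk of prefix sums stays in a strip of width 2. Since the walk
moves by `±1`, this happens iff all "doubled" positions `a (j + 1) = a j` have the same parity,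
i.e. iff for some phase `φ` the word flips sign on every block `{j, j + 1}` with `j ≡ φ (mod 2)`.

Fix phases for all rows and columns and join the two cells of each such block. Along an edge
both the array and the checkerboard `(-1) ^ (i + j)` change sign, so their product is constant on
connected components. A component avoiding the border contains a cell, its row partner and the
column partners of both, so there are at most `n ^ 2 / 4 + 4 * n` components, and
`M(n) ≤ 2 ^ (2 * n) * 2 ^ (n ^ 2 / 4 + 4 * n)`. Conversely, the checkerboard twisted by an
arbitrary sign on each `2 × 2` block gives `2 ^ ⌈n / 2⌉ ^ 2` valid arrays.
-/

open Finset SimpleGraph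

lemma Set.natCard_iUnion_le {ι α : Type*} [Fintype ι] (t : ι → Set α) (ht : ∀ i, (t i).Finite) :
    Nat.card (⋃ i, t i) ≤ ∑ i, Nat.card (t i) := by
  have := fun i => (ht i).to_subtype
  exact (Nat.card_le_card_of_surjective _ (Set.sigmaToiUnion_surjective t)).trans_eq
    Nat.card_sigma

lemma SimpleGraph.card_adjInvariant_le {V β : Type*} [Finite V] [Finite β] (G : SimpleGraph V) :
    Nat.card {f : V → β // ∀ v w, G.Adj v w → f v = f w} ≤
      Nat.card β ^ Nat.card G.ConnectedComponent := by
  rw [← Nat.card_fun]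
  have walk_const (f : {f : V → β // ∀ v w, G.Adj v w → f v = f w}) {v w : V} (p : G.Walk v w) :
      f.1 v = f.1 w := by
    induction p with
    | nil => rfl
    | cons h _ ih => exact (f.2 _ _ h).trans ih
  refine Nat.card_le_card_of_injective
    (fun f => ConnectedComponent.lift f.1 fun _ _ p _ => walk_const f p) fun f g h => ?_
  exact Subtype.ext (funext fun v => congrFun h (G.connectedComponentMk v))

lemma tendsto_div_sq_of_le_of_le {u : ℕ → ℝ} {c C : ℝ} (hlow : ∀ n : ℕ, c * n ^ 2 ≤ u n)
    (hup : ∀ n : ℕ, u n ≤ c * n ^ 2 + C * n) :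
    Tendsto (fun n : ℕ => u n / (n : ℝ) ^ 2) atTop (nhds c) := by
  have hlim : Tendsto (fun n : ℕ => c + C / n) atTop (nhds c) := by
    simpa using tendsto_const_nhds.add (tendsto_const_div_atTop_nhds_zero_nat C)
  refine tendsto_of_tendsto_of_tendsto_of_le_of_le' tendsto_const_nhds hlim ?_ ?_ <;>
    filter_upwards [eventually_gt_atTop 0] with n hn
  · rw [le_div_iff₀ (by positivity)]
    exact hlow n
  · rw [div_le_iff₀ (by positivity)]
    calc u n ≤ c * n ^ 2 + C * n := hup n
      _ = (c + C / n) * n ^ 2 := by field_simp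

lemma Real.natCast_le_logb_two {a M : ℕ} (h : 2 ^ a ≤ M) : (a : ℝ) ≤ Real.logb 2 M := by
  calc (a : ℝ) = Real.logb 2 (2 ^ a) := by rw [Real.logb_pow]; simp
    _ ≤ Real.logb 2 M := Real.logb_le_logb_of_le one_lt_two (by positivity) (by exact_mod_cast h)

lemma Real.logb_two_le_natCast {b M : ℕ} (hM : 0 < M) (h : M ≤ 2 ^ b) :
    Real.logb 2 M ≤ b := by
  calc Real.logb 2 M ≤ Real.logb 2 (2 ^ b) :=
        Real.logb_le_logb_of_le one_lt_two (by exact_mod_cast hM) (by exact_mod_cast h)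
    _ = b := by rw [Real.logb_pow]; simp

namespace Chg

def prefixSum (s : ℕ → ℤ) (k : ℕ) : ℤ := ∑ l ∈ range k, s l

lemma prefixSum_succ (s : ℕ → ℤ) (k : ℕ) : prefixSum s (k + 1) = prefixSum s k + s k :=
  sum_range_succ s k

section Sequence

variable {s : ℕ → ℤ} {n : ℕ}

def SeqPaired (φ n : ℕ) (s : ℕ → ℤ) : Prop :=
  ∀ j, j % 2 = φ → j + 1 < n → s (j + 1) = -s j

lemma prefixSum_emod_two (hs : ∀ k, s k = 1 ∨ s k = -1) (k : ℕ) :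
    prefixSum s k % 2 = k % 2 := by
  induction k with
  | zero => simp [prefixSum]
  | succ k ih => rw [prefixSum_succ]; push_cast; rcases hs k with h | h <;> omega

/-- Two doubled positions `s (i+1) = s i`, `s (j+1) = s j` of a walk confined to a strip of
width 2 both sit at the middle of the strip, so their prefix sums agree and `i ≡ j (mod 2)`. -/
lemma emod_two_eq_of_doubled (hs : ∀ k, s k = 1 ∨ s k = -1)
    (hS : ∀ x ≤ n, ∀ y ≤ n, |prefixSum s y - prefixSum s x| ≤ 2) {i j : ℕ}
    (hi : i + 1 < n) (hj : j + 1 < n) (hsi : s (i + 1) = s i) (hsj : s (j + 1) = s j) :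
    i % 2 = j % 2 := by
  have h₁ := hS i (by omega) (j + 2) hj
  have h₂ := hS (i + 2) hi j (by omega)
  have h₃ := hS i (by omega) j (by omega)
  have h₄ := hS (i + 2) hi (j + 2) hj
  have pi := prefixSum_emod_two hs (i + 1)
  have pj := prefixSum_emod_two hs (j + 1)
  simp only [prefixSum_succ, hsi, hsj, abs_le] at *
  rcases hs i with h | h <;> rcases hs j with h' | h' <;> push_cast at * <;> omega

lemma exists_seqPaired (hs : ∀ k, s k = 1 ∨ s k = -1)
    (hS : ∀ x ≤ n, ∀ y ≤ n, |prefixSum s y - prefixSum s x| ≤ 2) :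
    ∃ φ : Fin 2, SeqPaired φ n s := by
  have flip_of_ne {j} (h : s (j + 1) ≠ s j) : s (j + 1) = -s j := by
    rcases hs j with h' | h' <;> rcases hs (j + 1) with h'' | h'' <;> omega
  by_cases hdoubled : ∃ i, i % 2 = 0 ∧ i + 1 < n ∧ s (i + 1) = s i
  · obtain ⟨i, hi0, hin, hsi⟩ := hdoubled
    refine ⟨1, fun j hj hjn => flip_of_ne fun hsj => ?_⟩
    have := emod_two_eq_of_doubled hs hS hin hjn hsi hsj
    simp only [Fin.isValue, Fin.val_one] at hj
    omega
  · push Not at hdoubled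
    exact ⟨0, fun j hj hjn => flip_of_ne (hdoubled j hj hjn)⟩

/-- With phase `φ` the prefix sums at positions `≡ φ (mod 2)` are all equal, and every
other prefix sum is one step away from one of them. -/
lemma abs_prefixSum_sub_le_one (hs : ∀ k, s k = 1 ∨ s k = -1) {φ : ℕ} (hφ : φ < 2)
    (hp : SeqPaired φ n s) {x : ℕ} (hx : x ≤ n) :
    |prefixSum s x - prefixSum s φ| ≤ 1 := by
  have hconst : ∀ m, 2 * m + φ ≤ n → prefixSum s (2 * m + φ) = prefixSum s φ := by
    intro m
    induction m with
    | zero => simp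
    | succ m ih =>
      intro hm
      have hflip := hp (2 * m + φ) (by omega) (by omega)
      rw [show 2 * (m + 1) + φ = 2 * m + φ + 1 + 1 by ring, prefixSum_succ, prefixSum_succ,
        hflip, ← ih (by omega)]
      ring
  obtain ⟨m, rfl | rfl⟩ | ⟨rfl, rfl⟩ :
      (∃ m, x = 2 * m + φ ∨ x = 2 * m + φ + 1) ∨ (x = 0 ∧ φ = 1) := by
    by_cases h : φ ≤ x
    · exact Or.inl ⟨(x - φ) / 2, by omega⟩
    · omega
  · simp [hconst m hx]
  · rw [prefixSum_succ, hconst m (by omega)]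
    rcases hs (2 * m + φ) with h | h <;> simp [h]
  · rw [prefixSum_succ]
    rcases hs 0 with h | h <;> simp [prefixSum, h]

end Sequence

section Word

variable {n : ℕ}

-- Padding by `1` rather than `0` keeps `toSeq a` a `±1` sequence.
def toSeq (a : Fin n → ℤ) (k : ℕ) : ℤ := if h : k < n then a ⟨k, h⟩ else 1

lemma toSeq_of_lt (a : Fin n → ℤ) {k : ℕ} (h : k < n) : toSeq a k = a ⟨k, h⟩ := dif_pos h

lemma toSeq_eq_one_or (a : Fin n → ℤ) (ha : ∀ j, a j = 1 ∨ a j = -1) (k : ℕ) :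
    toSeq a k = 1 ∨ toSeq a k = -1 := by
  unfold toSeq
  split
  · exact ha _
  · exact Or.inl rfl

lemma sum_Icc_eq_prefixSum_sub (a : Fin n → ℤ) {i j : Fin n} (hij : i ≤ j) :
    ∑ k ∈ Icc i j, a k = prefixSum (toSeq a) (j + 1) - prefixSum (toSeq a) i := by
  rw [prefixSum, prefixSum, ← sum_Ico_eq_sub _ (by rw [Fin.le_def] at hij; omega),
    Ico_add_one_right_eq_Icc, ← Fin.map_valEmbedding_Icc, sum_map]
  exact sum_congr rfl fun k _ => (toSeq_of_lt a k.isLt).symm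

lemma chgWord_iff_prefixSum {b : ℤ} (hb : 0 ≤ b) (a : Fin n → ℤ) :
    ChgWord b a ↔ ∀ x ≤ n, ∀ y ≤ n, |prefixSum (toSeq a) y - prefixSum (toSeq a) x| ≤ b := by
  refine ⟨fun h => ?_, fun h i j hij => ?_⟩
  · have hlt : ∀ x y, x < y → y ≤ n → |prefixSum (toSeq a) y - prefixSum (toSeq a) x| ≤ b := by
      intro x y hxy hy
      have hxy' : (⟨x, by omega⟩ : Fin n) ≤ ⟨y - 1, by omega⟩ := Fin.mk_le_mk.2 (by omega)
      have hsum := h _ _ hxy'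
      rwa [sum_Icc_eq_prefixSum_sub _ hxy', Nat.sub_add_cancel (by omega)] at hsum
    intro x hx y hy
    rcases lt_trichotomy x y with hxy | rfl | hxy
    · exact hlt x y hxy hy
    · simpa using hb
    · rw [abs_sub_comm]
      exact hlt y x hxy hx
  · rw [sum_Icc_eq_prefixSum_sub a hij]
    exact h _ (by omega) _ (by omega)

def SameBlock (φ j k : ℕ) : Prop := j ≠ k ∧ (j + φ) / 2 = (k + φ) / 2

def Paired (φ : ℕ) (a : Fin n → ℤ) : Prop := ∀ j k : Fin n, SameBlock φ j k → a k = -a j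

lemma sameBlock_iff {φ j k : ℕ} (hφ : φ < 2) :
    SameBlock φ j k ↔ (k = j + 1 ∧ j % 2 = φ) ∨ (j = k + 1 ∧ k % 2 = φ) := by
  unfold SameBlock
  omega

lemma SameBlock.symm {φ j k : ℕ} (h : SameBlock φ j k) : SameBlock φ k j := ⟨h.1.symm, h.2.symm⟩

lemma SameBlock.neg_one_pow {φ j k : ℕ} (h : SameBlock φ j k) : (-1 : ℤ) ^ k = -(-1) ^ j := by
  obtain rfl | rfl : k = j + 1 ∨ j = k + 1 := by unfold SameBlock at h; omega
  · rw [pow_succ, mul_neg_one]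
  · rw [pow_succ, mul_neg_one, neg_neg]

lemma paired_iff_seqPaired {φ : ℕ} (hφ : φ < 2) (a : Fin n → ℤ) :
    Paired φ a ↔ SeqPaired φ n (toSeq a) := by
  refine ⟨fun h j hj hjn => ?_, fun h j k hjk => ?_⟩
  · rw [toSeq_of_lt a hjn, toSeq_of_lt a (by omega)]
    exact h ⟨j, by omega⟩ ⟨j + 1, hjn⟩ ((sameBlock_iff hφ).2 (Or.inl ⟨rfl, hj⟩))
  · rcases (sameBlock_iff hφ).1 hjk with ⟨hk, hj⟩ | ⟨hj, hk⟩
    · have := h j hj (hk ▸ k.isLt)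
      rwa [← hk, toSeq_of_lt a k.isLt, toSeq_of_lt a j.isLt] at this
    · have := h k hk (hj ▸ j.isLt)
      rw [← hj, toSeq_of_lt a k.isLt, toSeq_of_lt a j.isLt] at this
      rw [this, neg_neg]

theorem chgWord_two_iff (a : Fin n → ℤ) (ha : ∀ j, a j = 1 ∨ a j = -1) :
    ChgWord 2 a ↔ ∃ φ : Fin 2, Paired φ a := by
  have hs := toSeq_eq_one_or a ha
  simp only [chgWord_iff_prefixSum zero_le_two, paired_iff_seqPaired (Fin.is_lt _)]
  refine ⟨exists_seqPaired hs, fun ⟨φ, hp⟩ x hx y hy => ?_⟩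
  have hxφ := abs_prefixSum_sub_le_one hs φ.isLt hp hx
  have hyφ := abs_prefixSum_sub_le_one hs φ.isLt hp hy
  calc |prefixSum (toSeq a) y - prefixSum (toSeq a) x|
      ≤ |prefixSum (toSeq a) y - prefixSum (toSeq a) φ| +
        |prefixSum (toSeq a) φ - prefixSum (toSeq a) x| := abs_sub_le _ _ _
    _ ≤ 2 := by rw [abs_sub_comm _ (prefixSum _ x)]; linarith

end Word

section Array

variable {n : ℕ}

def chgArrays (n : ℕ) : Set (Fin n → Fin n → ℤ) :=
  {Γ | (∀ i j, Γ i j = 1 ∨ Γ i j = -1) ∧ (∀ i, ChgWord 2 fun j => Γ i j) ∧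
    ∀ j, ChgWord 2 fun i => Γ i j}

lemma chgSquare_eq_card (n : ℕ) : ChgSquare n = Nat.card (chgArrays n) := rfl

def pairedArrays (φr φc : Fin n → Fin 2) : Set (Fin n → Fin n → ℤ) :=
  {Γ | (∀ i j, Γ i j = 1 ∨ Γ i j = -1) ∧ (∀ i, Paired (φr i) fun j => Γ i j) ∧
    ∀ j, Paired (φc j) fun i => Γ i j}

lemma chgArrays_eq_iUnion :
    chgArrays n = ⋃ φ : (Fin n → Fin 2) × (Fin n → Fin 2), pairedArrays φ.1 φ.2 := by
  ext Γ
  simp only [chgArrays, pairedArrays, Set.mem_iUnion, Set.mem_ofPred_eq, Prod.exists]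
  constructor
  · rintro ⟨hpm, hrow, hcol⟩
    choose φr hφr using fun i => (chgWord_two_iff _ (hpm i)).1 (hrow i)
    choose φc hφc using fun j => (chgWord_two_iff _ (hpm · j)).1 (hcol j)
    exact ⟨φr, φc, hpm, hφr, hφc⟩
  · rintro ⟨φr, φc, hpm, hφr, hφc⟩
    exact ⟨hpm, fun i => (chgWord_two_iff _ (hpm i)).2 ⟨_, hφr i⟩,
      fun j => (chgWord_two_iff _ (hpm · j)).2 ⟨_, hφc j⟩⟩

lemma finite_signArrays (n : ℕ) :
    {Γ : Fin n → Fin n → ℤ | ∀ i j, Γ i j = 1 ∨ Γ i j = -1}.Finite := by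
  have : {Γ : Fin n → Fin n → ℤ | ∀ i j, Γ i j = 1 ∨ Γ i j = -1} =
      Set.pi Set.univ fun _ => Set.pi Set.univ fun _ => {1, -1} := by
    ext Γ
    simp
  rw [this]
  exact Set.Finite.pi fun _ => Set.Finite.pi fun _ => Set.toFinite _

lemma finite_pairedArrays (φr φc : Fin n → Fin 2) : (pairedArrays φr φc).Finite :=
  (finite_signArrays n).subset fun _ h => h.1

lemma finite_chgArrays (n : ℕ) : (chgArrays n).Finite :=
  (finite_signArrays n).subset fun _ h => h.1

end Array

section Graph

variable {n : ℕ}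

def pairGraph (φr φc : Fin n → Fin 2) : SimpleGraph (Fin n × Fin n) where
  Adj v w := (v.1 = w.1 ∧ SameBlock (φr v.1) v.2 w.2) ∨ (v.2 = w.2 ∧ SameBlock (φc v.2) v.1 w.1)
  symm := ⟨fun v w => by
    rintro (⟨h, hb⟩ | ⟨h, hb⟩)
    · exact Or.inl ⟨h.symm, h ▸ hb.symm⟩
    · exact Or.inr ⟨h.symm, h ▸ hb.symm⟩⟩
  loopless := ⟨fun v => by rintro (⟨-, hb⟩ | ⟨-, hb⟩) <;> exact hb.1 rfl⟩

def agreesWithChecker (Γ : Fin n → Fin n → ℤ) (v : Fin n × Fin n) : Bool :=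
  decide (Γ v.1 v.2 = (-1) ^ (v.1.val + v.2.val))

/-- Along an edge both `Γ` and the checkerboard change sign. -/
lemma agreesWithChecker_eq_of_adj {φr φc : Fin n → Fin 2} {Γ : Fin n → Fin n → ℤ}
    (hΓ : Γ ∈ pairedArrays φr φc) {v w : Fin n × Fin n} (h : (pairGraph φr φc).Adj v w) :
    agreesWithChecker Γ v = agreesWithChecker Γ w := by
  obtain ⟨i, j⟩ := v
  obtain ⟨i', j'⟩ := w
  have flip {x y : ℤ} {p q : ℕ} (hxy : y = -x) (hpq : (-1 : ℤ) ^ q = -(-1) ^ p) :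
      decide (x = (-1) ^ p) = decide (y = (-1) ^ q) := by
    simp [hxy, hpq]
  rcases h with ⟨rfl, hb⟩ | ⟨rfl, hb⟩
  · exact flip (hΓ.2.1 i j j' hb) (by rw [pow_add, pow_add, hb.neg_one_pow, mul_neg])
  · exact flip (hΓ.2.2 j i i' hb) (by rw [pow_add, pow_add, hb.neg_one_pow, neg_mul])

lemma card_pairedArrays_le (φr φc : Fin n → Fin 2) :
    Nat.card (pairedArrays φr φc) ≤ 2 ^ Nat.card (pairGraph φr φc).ConnectedComponent := by
  have hinj : Function.Injective fun Γ : pairedArrays φr φc =>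
      (⟨agreesWithChecker Γ.1, fun _ _ => agreesWithChecker_eq_of_adj Γ.2⟩ :
        {f : Fin n × Fin n → Bool // ∀ v w, (pairGraph φr φc).Adj v w → f v = f w}) := by
    rintro ⟨Γ, hΓ⟩ ⟨Δ, hΔ⟩ h
    ext i j
    have hij := congrFun (congrArg Subtype.val h) (i, j)
    simp only [agreesWithChecker, decide_eq_decide] at hij
    rcases hΓ.1 i j with h₁ | h₁ <;> rcases hΔ.1 i j with h₂ | h₂ <;>
      rcases neg_one_pow_eq_or ℤ (i.val + j.val) with h₃ | h₃ <;> simp_all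
  simpa using (Nat.card_le_card_of_injective _ hinj).trans (pairGraph φr φc).card_adjInvariant_le

end Graph

section Components

open scoped Classical

variable {n : ℕ}

def borderIdx (n : ℕ) : Finset (Fin n) := {i | i.val = 0 ∨ i.val + 1 = n}

lemma card_borderIdx_le (n : ℕ) : #(borderIdx n) ≤ 2 := by
  refine (card_le_card_of_injOn (t := {0, n - 1}) Fin.val (fun i hi => ?_)
    Fin.val_injective.injOn).trans card_le_two
  simp only [borderIdx, coe_filter, mem_univ, true_and, Set.mem_ofPred_eq] at hi
  simp only [coe_insert, coe_singleton, Set.mem_insert_iff, Set.mem_singleton_iff]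
  omega

lemma exists_sameBlock (φ : Fin 2) {k : Fin n} (hk : k ∉ borderIdx n) :
    ∃ k' : Fin n, SameBlock φ k k' := by
  simp only [borderIdx, mem_filter, mem_univ, true_and, not_or] at hk
  have := φ.isLt
  by_cases h : k.val % 2 = φ
  · exact ⟨⟨k + 1, by omega⟩, by simp only [SameBlock]; omega⟩
  · exact ⟨⟨k - 1, by omega⟩, by simp only [SameBlock]; omega⟩

/-- An inner cell, its row partner, and the column partners of both are four distinct cells
of one component. -/
lemma four_le_card_component {φr φc : Fin n → Fin 2} {i j : Fin n} (hi : i ∉ borderIdx n)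
    (hj : j ∉ borderIdx n) :
    4 ≤ #{w | (pairGraph φr φc).connectedComponentMk w =
      (pairGraph φr φc).connectedComponentMk (i, j)} := by
  set G := pairGraph φr φc
  obtain ⟨j', hj'⟩ := exists_sameBlock (φr i) hj
  obtain ⟨i', hi'⟩ := exists_sameBlock (φc j) hi
  obtain ⟨i'', hi''⟩ := exists_sameBlock (φc j') hi
  have e₁ : G.connectedComponentMk (i, j') = G.connectedComponentMk (i, j) :=
    (ConnectedComponent.connectedComponentMk_eq_of_adj (Or.inl ⟨rfl, hj'⟩)).symm
  have e₂ : G.connectedComponentMk (i', j) = G.connectedComponentMk (i, j) :=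
    (ConnectedComponent.connectedComponentMk_eq_of_adj (Or.inr ⟨rfl, hi'⟩)).symm
  have e₃ : G.connectedComponentMk (i'', j') = G.connectedComponentMk (i, j) :=
    (ConnectedComponent.connectedComponentMk_eq_of_adj (Or.inr ⟨rfl, hi''⟩)).symm.trans e₁
  have hjj' : j ≠ j' := fun h => hj'.1 (congrArg Fin.val h)
  have hii' : i ≠ i' := fun h => hi'.1 (congrArg Fin.val h)
  have hii'' : i ≠ i'' := fun h => hi''.1 (congrArg Fin.val h)
  calc 4 = #{(i, j), (i, j'), (i', j), (i'', j')} := by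
        simp [card_insert_of_notMem, hjj', hii', hii'', hjj'.symm]
    _ ≤ _ := card_le_card fun w hw => by
        simp only [mem_insert, mem_singleton] at hw
        rcases hw with rfl | rfl | rfl | rfl <;>
          simp only [mem_filter, mem_univ, true_and, e₁, e₂, e₃]

/-- A component either meets the border, or has at least four cells. -/
lemma card_connectedComponent_pairGraph_le (φr φc : Fin n → Fin 2) :
    Nat.card (pairGraph φr φc).ConnectedComponent ≤ n ^ 2 / 4 + 4 * n := by
  set G := pairGraph φr φc
  let border : Finset (Fin n × Fin n) := {v | v.1 ∈ borderIdx n ∨ v.2 ∈ borderIdx n}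
  have hborder : #border ≤ 4 * n :=
    calc #border ≤ #(borderIdx n ×ˢ univ ∪ univ ×ˢ borderIdx n) :=
          card_le_card fun v => by simp [border]
      _ ≤ 2 * n + n * 2 := (card_union_le _ _).trans (by
          simp only [card_product, card_univ, Fintype.card_fin]
          gcongr <;> exact card_borderIdx_le n)
      _ = 4 * n := by ring
  have hfiber (c : G.ConnectedComponent) :
      4 ≤ #{v | G.connectedComponentMk v = c} +
        4 * #{v ∈ border | G.connectedComponentMk v = c} := by
    induction c using ConnectedComponent.ind with | h v => ?_
    obtain ⟨i, j⟩ := v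
    by_cases hv : (i, j) ∈ border
    · have : 0 < #{w ∈ border | G.connectedComponentMk w = G.connectedComponentMk (i, j)} :=
        card_pos.2 ⟨(i, j), by simp [hv]⟩
      omega
    · simp only [border, mem_filter, mem_univ, true_and, not_or] at hv
      exact (four_le_card_component hv.1 hv.2).trans (Nat.le_add_right _ _)
  have hsum : ∑ c : G.ConnectedComponent, #{v | G.connectedComponentMk v = c} = n ^ 2 := by
    rw [← card_eq_sum_card_fiberwise (f := G.connectedComponentMk) fun _ _ => mem_univ _]
    simp [sq]
  have hsum_border :
      ∑ c : G.ConnectedComponent, #{v ∈ border | G.connectedComponentMk v = c} = #border :=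
    (card_eq_sum_card_fiberwise fun _ _ => mem_univ _).symm
  have hcount : 4 * Fintype.card G.ConnectedComponent ≤ n ^ 2 + 4 * #border :=
    calc 4 * Fintype.card G.ConnectedComponent = ∑ _c : G.ConnectedComponent, 4 := by
          simp [mul_comm]
      _ ≤ ∑ c, (#{v | G.connectedComponentMk v = c} +
            4 * #{v ∈ border | G.connectedComponentMk v = c}) := sum_le_sum fun c _ => hfiber c
      _ = n ^ 2 + 4 * #border := by rw [sum_add_distrib, ← mul_sum, hsum, hsum_border]
  rw [Nat.card_eq_fintype_card]
  generalize n ^ 2 = N at hcount ⊢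
  omega

end Components

section Bounds

variable {n : ℕ}

def blockArray (c : Fin ((n + 1) / 2) → Fin ((n + 1) / 2) → Fin 2) : Fin n → Fin n → ℤ :=
  fun i j => (-1) ^ (i.val + j.val + c ⟨i / 2, by omega⟩ ⟨j / 2, by omega⟩)

lemma blockArray_mem_pairedArrays (c : Fin ((n + 1) / 2) → Fin ((n + 1) / 2) → Fin 2) :
    blockArray c ∈ pairedArrays 0 0 := by
  refine ⟨fun i j => neg_one_pow_eq_or ℤ _, fun i j k hjk => ?_, fun j i k hik => ?_⟩
  · have hblock : (⟨k / 2, by omega⟩ : Fin ((n + 1) / 2)) = ⟨j / 2, by omega⟩ :=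
      Fin.ext (by simpa using hjk.2.symm)
    simp only [blockArray, hblock, pow_add, hjk.neg_one_pow]
    ring
  · have hblock : (⟨k / 2, by omega⟩ : Fin ((n + 1) / 2)) = ⟨i / 2, by omega⟩ :=
      Fin.ext (by simpa using hik.2.symm)
    simp only [blockArray, hblock, pow_add, hik.neg_one_pow]
    ring

lemma blockArray_injective : Function.Injective (blockArray (n := n)) := by
  intro c d h
  ext p q
  have hpq := congrFun (congrFun h ⟨2 * p, by omega⟩) ⟨2 * q, by omega⟩
  have hp : (⟨2 * p / 2, by omega⟩ : Fin ((n + 1) / 2)) = p := Fin.ext (by simp)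
  have hq : (⟨2 * q / 2, by omega⟩ : Fin ((n + 1) / 2)) = q := Fin.ext (by simp)
  have heven : Even (2 * p.val + 2 * q.val) := ⟨p + q, by ring⟩
  simp only [blockArray, hp, hq, pow_add _ (2 * p.val + 2 * q.val), heven.neg_one_pow,
    one_mul] at hpq
  revert hpq
  generalize c p q = x
  generalize d p q = y
  fin_cases x <;> fin_cases y <;> simp

lemma pow_le_chgSquare (n : ℕ) : 2 ^ (((n + 1) / 2) ^ 2) ≤ ChgSquare n := by
  rw [chgSquare_eq_card]
  have := (finite_chgArrays n).to_subtype
  have hmem (c) : blockArray c ∈ chgArrays n := by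
    rw [chgArrays_eq_iUnion]
    exact Set.mem_iUnion.2 ⟨(0, 0), blockArray_mem_pairedArrays c⟩
  calc 2 ^ (((n + 1) / 2) ^ 2) = Nat.card (Fin ((n + 1) / 2) → Fin ((n + 1) / 2) → Fin 2) := by
        simp [sq, pow_mul]
    _ ≤ Nat.card (chgArrays n) := Nat.card_le_card_of_injective (fun c => ⟨blockArray c, hmem c⟩)
        fun c d h => blockArray_injective (congrArg Subtype.val h)

lemma chgSquare_le_pow (n : ℕ) : ChgSquare n ≤ 2 ^ (n ^ 2 / 4 + 6 * n) := by
  rw [chgSquare_eq_card, chgArrays_eq_iUnion]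
  calc Nat.card ↑(⋃ φ : (Fin n → Fin 2) × (Fin n → Fin 2), pairedArrays φ.1 φ.2)
      ≤ ∑ φ : (Fin n → Fin 2) × (Fin n → Fin 2), Nat.card (pairedArrays φ.1 φ.2) :=
        Set.natCard_iUnion_le _ fun φ => finite_pairedArrays φ.1 φ.2
    _ ≤ ∑ _φ : (Fin n → Fin 2) × (Fin n → Fin 2), 2 ^ (n ^ 2 / 4 + 4 * n) :=
        sum_le_sum fun φ _ => (card_pairedArrays_le φ.1 φ.2).trans
          (Nat.pow_le_pow_right two_pos (card_connectedComponent_pairGraph_le φ.1 φ.2))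
    _ = 2 ^ (n ^ 2 / 4 + 6 * n) := by
        simp only [sum_const, card_univ, Fintype.card_prod, Fintype.card_fun, Fintype.card_fin,
          smul_eq_mul]
        ring

lemma le_logb_chgSquare (n : ℕ) : 1 / 4 * (n : ℝ) ^ 2 ≤ Real.logb 2 (ChgSquare n) := by
  have hn : (n : ℝ) ≤ 2 * ((n + 1) / 2 : ℕ) := by
    exact_mod_cast (by omega : n ≤ 2 * ((n + 1) / 2))
  calc 1 / 4 * (n : ℝ) ^ 2 ≤ (((n + 1) / 2) ^ 2 : ℕ) := by push_cast; nlinarith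
    _ ≤ Real.logb 2 (ChgSquare n) := Real.natCast_le_logb_two (pow_le_chgSquare n)

lemma logb_chgSquare_le (n : ℕ) : Real.logb 2 (ChgSquare n) ≤ 1 / 4 * (n : ℝ) ^ 2 + 6 * n := by
  have hpos : 0 < ChgSquare n := lt_of_lt_of_le (Nat.two_pow_pos _) (pow_le_chgSquare n)
  calc Real.logb 2 (ChgSquare n) ≤ (n ^ 2 / 4 + 6 * n : ℕ) :=
        Real.logb_two_le_natCast hpos (chgSquare_le_pow n)
    _ ≤ 1 / 4 * (n : ℝ) ^ 2 + 6 * n := by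
        have := Nat.cast_div_le (α := ℝ) (m := n ^ 2) (n := 4)
        push_cast at this ⊢
        linarith

end Bounds

end Chg

/-- The capacity of the 2-dimensional isotropic axial product of `CHG(2)` equals
`1/4`: `lim_{n→∞} log₂(ChgSquare n) / n² = 1/4`. -/
theorem stmt7 :
    Tendsto (fun n : ℕ => Real.logb 2 (ChgSquare n) / (n : ℝ) ^ 2)
      atTop (nhds (1 / 4)) :=
  tendsto_div_sq_of_le_of_le Chg.le_logb_chgSquare Chg.logb_chgSquare_le
end

section
/- For every positive integer n, the number of arrays in {+1,-1}^{2n×2n} with all rows and columns in CHG(2) is at least 2^{n^2}. -/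
/-- If consecutive pairs cancel and entries are bounded by 1, the word is in CHG(2). -/
lemma chg_of_pairs (N : ℕ) (a : Fin (2 * N) → ℤ)
    (h1 : ∀ k, |a k| ≤ 1)
    (h2 : ∀ (q : ℕ) (h : 2 * q + 1 < 2 * N),
      a ⟨2 * q, by omega⟩ + a ⟨2 * q + 1, h⟩ = 0) :
    ChgWord 2 a := by
  set a' : ℕ → ℤ := fun k => if h : k < 2 * N then a ⟨k, h⟩ else 0 with ha'
  have habs : ∀ k, |a' k| ≤ 1 := by
    intro k
    by_cases h : k < 2 * N
    · simp only [ha', dif_pos h]; exact h1 _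
    · simp [ha', dif_neg h]
  have hpair : ∀ q, a' (2 * q) + a' (2 * q + 1) = 0 := by
    intro q
    by_cases h : 2 * q + 1 < 2 * N
    · have h0 : 2 * q < 2 * N := by omega
      simp only [ha', dif_pos h, dif_pos h0]
      exact h2 q h
    · have h0 : ¬ (2 * q < 2 * N) := by omega
      simp [ha', dif_neg h, dif_neg h0]
  have hS0 : ∀ q, ∑ k ∈ Finset.range (2 * q), a' k = 0 := by
    intro q
    induction q with
    | zero => simp
    | succ q ih =>
      have e : 2 * (q + 1) = (2 * q + 1) + 1 := by ring
      rw [e, Finset.sum_range_succ, Finset.sum_range_succ, ih]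
      have := hpair q
      linarith
  have hS : ∀ m, |∑ k ∈ Finset.range m, a' k| ≤ 1 := by
    intro m
    rcases Nat.even_or_odd m with ⟨q, hq⟩ | ⟨q, hq⟩
    · have : m = 2 * q := by omega
      rw [this, hS0]; simp
    · have : m = 2 * q + 1 := by omega
      rw [this, Finset.sum_range_succ, hS0]
      simpa using habs (2 * q)
  intro i j hij
  have hmap : ∑ k ∈ Finset.Icc i j, a k = ∑ k ∈ Finset.Icc (i : ℕ) (j : ℕ), a' k := by
    rw [← Fin.map_valEmbedding_Icc, Finset.sum_map]
    apply Finset.sum_congr rfl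
    intro x _
    simp [ha', x.isLt]
  rw [hmap, ← Finset.Ico_add_one_right_eq_Icc, Finset.sum_Ico_eq_sub _ (by exact_mod_cast Nat.le_succ_of_le hij)]
  calc |∑ k ∈ Finset.range ((j : ℕ) + 1), a' k - ∑ k ∈ Finset.range (i : ℕ), a' k|
      ≤ |∑ k ∈ Finset.range ((j : ℕ) + 1), a' k| + |∑ k ∈ Finset.range (i : ℕ), a' k| :=
        abs_sub _ _
    _ ≤ 1 + 1 := add_le_add (hS _) (hS _)
    _ = 2 := by norm_num

/-- For every positive `n`, the number of `2n × 2n` arrays over `{+1,-1}` with all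
rows and columns in `CHG(2)` is at least `2^(n²)`. -/
theorem stmt8 (n : ℕ) (hn : 0 < n) :
    2 ^ (n ^ 2) ≤
      Nat.card {Γ : Fin (2 * n) → Fin (2 * n) → ℤ //
        (∀ i j : Fin (2 * n), Γ i j = 1 ∨ Γ i j = -1) ∧
        (∀ i : Fin (2 * n), ChgWord 2 (fun j => Γ i j)) ∧
        (∀ j : Fin (2 * n), ChgWord 2 (fun i => Γ i j))} := by
  set T := {Γ : Fin (2 * n) → Fin (2 * n) → ℤ //
        (∀ i j : Fin (2 * n), Γ i j = 1 ∨ Γ i j = -1) ∧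
        (∀ i : Fin (2 * n), ChgWord 2 (fun j => Γ i j)) ∧
        (∀ j : Fin (2 * n), ChgWord 2 (fun i => Γ i j))} with hT
  set half : Fin (2 * n) → Fin n := fun i => ⟨(i : ℕ) / 2, by have := i.isLt; omega⟩
    with hhalf
  -- the array built from signs s
  set G : (Fin n → Fin n → Bool) → Fin (2 * n) → Fin (2 * n) → ℤ :=
    fun s i j => (if s (half i) (half j) then (1 : ℤ) else -1) * (-1) ^ ((i : ℕ) + (j : ℕ))
    with hG
  have hpm : ∀ s i j, G s i j = 1 ∨ G s i j = -1 := by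
    intro s i j
    rcases neg_one_pow_eq_or ℤ ((i : ℕ) + (j : ℕ)) with h | h <;>
      by_cases hs : s (half i) (half j) <;> simp [hG, hs, h]
  have habs1 : ∀ s i j, |G s i j| ≤ 1 := by
    intro s i j
    rcases hpm s i j with h | h <;> simp [h]
  have hhalf2 : ∀ q : ℕ, (2 * q) / 2 = q := fun q => by omega
  have hhalf2' : ∀ q : ℕ, (2 * q + 1) / 2 = q := fun q => by omega
  have hcancel : ∀ s (i : Fin (2 * n)) (q : ℕ) (h : 2 * q + 1 < 2 * n),
      G s i ⟨2 * q, by omega⟩ + G s i ⟨2 * q + 1, h⟩ = 0 := by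
    intro s i q h
    have e1 : half (⟨2 * q, by omega⟩ : Fin (2 * n)) = half ⟨2 * q + 1, h⟩ := by
      simp [hhalf, hhalf2, hhalf2']
    simp only [hG, e1]
    have : ((-1 : ℤ)) ^ ((i : ℕ) + (2 * q + 1)) = -(-1) ^ ((i : ℕ) + 2 * q) := by
      rw [show (i : ℕ) + (2 * q + 1) = ((i : ℕ) + 2 * q) + 1 by ring, pow_succ]
      ring
    rw [this]; ring
  have hcancel' : ∀ s (j : Fin (2 * n)) (q : ℕ) (h : 2 * q + 1 < 2 * n),
      G s ⟨2 * q, by omega⟩ j + G s ⟨2 * q + 1, h⟩ j = 0 := by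
    intro s j q h
    have e1 : half (⟨2 * q, by omega⟩ : Fin (2 * n)) = half ⟨2 * q + 1, h⟩ := by
      simp [hhalf, hhalf2, hhalf2']
    simp only [hG, e1]
    have : ((-1 : ℤ)) ^ ((2 * q + 1) + (j : ℕ)) = -(-1) ^ (2 * q + (j : ℕ)) := by
      rw [show (2 * q + 1) + (j : ℕ) = (2 * q + (j : ℕ)) + 1 by ring, pow_succ]
      ring
    rw [this]; ring
  have hmem : ∀ s, (∀ i j : Fin (2 * n), G s i j = 1 ∨ G s i j = -1) ∧
        (∀ i : Fin (2 * n), ChgWord 2 (fun j => G s i j)) ∧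
        (∀ j : Fin (2 * n), ChgWord 2 (fun i => G s i j)) := by
    intro s
    refine ⟨hpm s, fun i => ?_, fun j => ?_⟩
    · exact chg_of_pairs n (fun j => G s i j) (fun k => habs1 s i k) (fun q h => hcancel s i q h)
    · exact chg_of_pairs n (fun i => G s i j) (fun k => habs1 s k j) (fun q h => hcancel' s j q h)
  set f : (Fin n → Fin n → Bool) → T := fun s => ⟨G s, hmem s⟩ with hf
  have hinj : Function.Injective f := by
    intro s s' hss
    have hG' : G s = G s' := congrArg Subtype.val hss
    funext p q
    have hp : 2 * (p : ℕ) < 2 * n := by have := p.isLt; omega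
    have hq : 2 * (q : ℕ) < 2 * n := by have := q.isLt; omega
    have h := congrFun (congrFun hG' ⟨2 * (p : ℕ), hp⟩) ⟨2 * (q : ℕ), hq⟩
    have hev : ((-1 : ℤ)) ^ (2 * (p : ℕ) + 2 * (q : ℕ)) = 1 := by
      apply Even.neg_one_pow; exact ⟨(p : ℕ) + (q : ℕ), by ring⟩
    have e1 : half (⟨2 * (p : ℕ), hp⟩ : Fin (2 * n)) = p := by
      apply Fin.ext; simp [hhalf, hhalf2]
    have e2 : half (⟨2 * (q : ℕ), hq⟩ : Fin (2 * n)) = q := by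
      apply Fin.ext; simp [hhalf, hhalf2]
    simp only [hG, e1, e2, hev, mul_one] at h
    by_cases h1 : s p q <;> by_cases h2 : s' p q <;> simp [h1, h2] at h ⊢
  haveI : Finite T := by
    apply Finite.of_injective (fun Γ : T => fun i j => decide (Γ.1 i j = 1))
    intro Γ Γ' h
    apply Subtype.ext
    funext i j
    have h' := congrFun (congrFun h i) j
    rcases Γ.2.1 i j with h1 | h1 <;> rcases Γ'.2.1 i j with h2 | h2 <;>
      simp [h1, h2] at h' ⊢
  have := Nat.card_le_card_of_injective f hinj
  have hcard : Nat.card (Fin n → Fin n → Bool) = 2 ^ (n ^ 2) := by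
    simp [Nat.card_eq_fintype_card, Fintype.card_fun, pow_two]
    ring_nf
  rw [hcard] at this
  exact this
end

section
/- Let Γ⁰ and Γ¹ be the 2×2 arrays over {+1,-1} given by (Γⁱ)_{(j,k)} = (-1)^{i+j+k}. If an n×n binary array B is arbitrary and Γ is the 2n×2n array obtained by replacing each entry B_{(s,t)} with the 2×2 block Γ^{B_{(s,t)}}, then every row and every column of Γ satisfies CHG(2), i.e., all contiguous partial sums along rows and columns have absolute value at most 2. -/
lemma stmt9_key (n : ℕ) (f : ℕ → ℤ)
    (hpair : ∀ t < n, f (2 * t) + f (2 * t + 1) = 0)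
    (habs : ∀ k < 2 * n, |f k| ≤ 1) :
    ∀ i j : ℕ, i ≤ j → j < 2 * n → |∑ k ∈ Finset.Icc i j, f k| ≤ 2 := by
  have hS : ∀ t ≤ n, ∑ k ∈ Finset.range (2 * t), f k = 0 := by
    intro t
    induction t with
    | zero => simp
    | succ t ih =>
      intro h
      have h1 := hpair t (by omega)
      have h2 := ih (by omega)
      have he : 2 * (t + 1) = 2 * t + 1 + 1 := by ring
      rw [he, Finset.sum_range_succ, Finset.sum_range_succ, h2]
      linarith
  have hS1 : ∀ m ≤ 2 * n, |∑ k ∈ Finset.range m, f k| ≤ 1 := by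
    intro m hm
    rcases Nat.even_or_odd m with ⟨t, ht⟩ | ⟨t, ht⟩
    · have : m = 2 * t := by omega
      rw [this, hS t (by omega)]
      simp
    · have hmt : m = 2 * t + 1 := by omega
      rw [hmt, Finset.sum_range_succ, hS t (by omega), zero_add]
      exact habs _ (by omega)
  intro i j hij hj
  have hIcc : Finset.Icc i j = Finset.Ico i (j + 1) := by
    rw [Finset.Ico_add_one_right_eq_Icc]
  rw [hIcc, Finset.sum_Ico_eq_sub _ (by omega)]
  calc |∑ k ∈ Finset.range (j+1), f k - ∑ k ∈ Finset.range i, f k|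
      ≤ |∑ k ∈ Finset.range (j+1), f k| + |∑ k ∈ Finset.range i, f k| := abs_sub _ _
    _ ≤ 1 + 1 := add_le_add (hS1 _ (by omega)) (hS1 _ (by omega))
    _ = 2 := by norm_num

/-- Substituting for each entry `B s t` of an arbitrary binary `n × n` array the
`2 × 2` block `Γ^{B s t}` with `(Γ^i)_{(j,k)} = (-1)^{i+j+k}` produces a `2n × 2n`
array over `{+1,-1}` all of whose rows and columns satisfy `CHG(2)`, i.e. all
contiguous partial sums along rows and columns have absolute value at most 2. -/
theorem stmt9 (n : ℕ) (B : ℕ → ℕ → ℕ) (hB : ∀ s t, B s t = 0 ∨ B s t = 1)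
    (Γ : ℕ → ℕ → ℤ)
    (hΓ : ∀ s < n, ∀ t < n, ∀ j < 2, ∀ k < 2,
      Γ (2 * s + j) (2 * t + k) = (-1 : ℤ) ^ (B s t + j + k)) :
    (∀ r < 2 * n, ∀ i j : ℕ, i ≤ j → j < 2 * n →
      |∑ k ∈ Finset.Icc i j, Γ r k| ≤ 2) ∧
    (∀ c < 2 * n, ∀ i j : ℕ, i ≤ j → j < 2 * n →
      |∑ k ∈ Finset.Icc i j, Γ k c| ≤ 2) := by
  constructor
  · intro r hr
    obtain ⟨s, j, hs, hj, hrs⟩ : ∃ s j, s < n ∧ j < 2 ∧ r = 2 * s + j :=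
      ⟨r / 2, r % 2, by omega, by omega, by omega⟩
    apply stmt9_key n (Γ r)
    · intro t ht
      have h0 := hΓ s hs t ht j hj 0 (by omega)
      have h1 := hΓ s hs t ht j hj 1 (by omega)
      rw [hrs]
      rw [show 2 * t = 2 * t + 0 from rfl] at *
      rw [h0, h1, pow_succ]
      ring
    · intro k hk
      obtain ⟨t, l, ht, hl, hkl⟩ : ∃ t l, t < n ∧ l < 2 ∧ k = 2 * t + l :=
        ⟨k / 2, k % 2, by omega, by omega, by omega⟩
      rw [hrs, hkl, hΓ s hs t ht j hj l hl]
      simp [abs_pow]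
  · intro c hc
    obtain ⟨t, l, ht, hl, hcs⟩ : ∃ t l, t < n ∧ l < 2 ∧ c = 2 * t + l :=
      ⟨c / 2, c % 2, by omega, by omega, by omega⟩
    apply stmt9_key n (fun k => Γ k c)
    · intro s hs
      have h0 := hΓ s hs t ht 0 (by omega) l hl
      have h1 := hΓ s hs t ht 1 (by omega) l hl
      rw [hcs]
      rw [show 2 * s = 2 * s + 0 from rfl, h0]
      rw [show 2 * s + 0 + 1 = 2 * s + 1 from rfl, h1]
      rw [show B s t + 1 + l = (B s t + 0 + l) + 1 from by ring, pow_succ]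
      ring
    · intro k hk
      obtain ⟨s, j, hs, hj, hkj⟩ : ∃ s j, s < n ∧ j < 2 ∧ k = 2 * s + j :=
        ⟨k / 2, k % 2, by omega, by omega, by omega⟩
      rw [hcs]
      rw [hkj, hΓ s hs t ht j hj l hl]
      simp [abs_pow]
end

section
/- For every positive integer n ≥ 2, the number of n×n arrays over {+1,-1} with all rows and columns in CHG(2) is at most 2^{2n} · 2^{n^2/4 + n^2 - (n-2)^2}. -/
namespace S10

variable {n : ℕ}

def ext (a : Fin n → ℤ) (k : ℕ) : ℤ := if h : k < n then a ⟨k, h⟩ else 0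

def pre (a : Fin n → ℤ) (j : ℕ) : ℤ := ∑ k ∈ Finset.range j, ext a k

lemma pre_zero (a : Fin n → ℤ) : pre a 0 = 0 := by simp [pre]

lemma pre_succ (a : Fin n → ℤ) {j : ℕ} (hj : j < n) :
    pre a (j + 1) = pre a j + a ⟨j, hj⟩ := by
  simp [pre, Finset.sum_range_succ, ext, hj]

lemma sum_Icc_eq (a : Fin n → ℤ) (i j : Fin n) (hij : i ≤ j) :
    ∑ k ∈ Finset.Icc i j, a k = pre a ((j : ℕ) + 1) - pre a (i : ℕ) := by
  have h1 : ∑ k ∈ Finset.Icc i j, a k = ∑ k ∈ Finset.Icc (i : ℕ) (j : ℕ), ext a k := by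
    rw [← Fin.map_valEmbedding_Icc, Finset.sum_map]
    refine Finset.sum_congr rfl fun k _ => ?_
    simp [ext, k.isLt]
  rw [h1, ← Finset.Ico_add_one_right_eq_Icc,
    Finset.sum_Ico_eq_sub _ (by exact_mod_cast Nat.le_succ_of_le hij)]
  rfl

lemma pre_diff (a : Fin n → ℤ) (hc : ChgWord 2 a) {p q : ℕ}
    (hpq : p ≤ q) (hq : q ≤ n) : |pre a q - pre a p| ≤ 2 := by
  rcases eq_or_lt_of_le hpq with rfl | h
  · simp
  · have hp : p < n := by omega
    have hq1 : q - 1 < n := by omega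
    have hle : (⟨p, hp⟩ : Fin n) ≤ ⟨q - 1, hq1⟩ := by
      simp only [Fin.le_def]; omega
    have := hc ⟨p, hp⟩ ⟨q - 1, hq1⟩ hle
    rw [sum_Icc_eq a _ _ hle] at this
    simpa [show q - 1 + 1 = q by omega] using this

lemma pre_parity (a : Fin n → ℤ) (h1 : ∀ i, a i = 1 ∨ a i = -1) :
    ∀ j ≤ n, (2 : ℤ) ∣ (pre a j - j) := by
  intro j
  induction j with
  | zero => intro _; simp [pre_zero]
  | succ j ih =>
    intro hj
    have hjn : j < n := hj
    have hih := ih (by omega)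
    rw [pre_succ a hjn]
    rcases h1 ⟨j, hjn⟩ with h | h <;> rw [h] <;> push_cast <;> omega

def preSet (a : Fin n → ℤ) : Finset ℤ := (Finset.range (n + 1)).image (pre a)

lemma preSet_nonempty (a : Fin n → ℤ) : (preSet a).Nonempty :=
  ⟨pre a 0, Finset.mem_image_of_mem _ (by simp)⟩

def mlo (a : Fin n → ℤ) : ℤ := (preSet a).min' (preSet_nonempty a)

lemma mlo_le (a : Fin n → ℤ) {j : ℕ} (hj : j ≤ n) : mlo a ≤ pre a j :=
  Finset.min'_le _ _ (Finset.mem_image_of_mem _ (Finset.mem_range.2 (by omega)))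

lemma le_mlo (a : Fin n → ℤ) (hc : ChgWord 2 a) {j : ℕ} (hj : j ≤ n) :
    pre a j ≤ mlo a + 2 := by
  obtain ⟨x, hx, hxe⟩ := Finset.mem_image.1 (Finset.min'_mem (preSet a) (preSet_nonempty a))
  have hxn : x ≤ n := by have := Finset.mem_range.1 hx; omega
  have hxe' : pre a x = mlo a := hxe
  rcases le_total x j with h | h
  · have := pre_diff a hc h hj
    rw [abs_le] at this; omega
  · have := pre_diff a hc h hxn
    rw [abs_le] at this; omega

lemma mlo_nonpos (a : Fin n → ℤ) : mlo a ≤ 0 := by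
  have := mlo_le a (Nat.zero_le n)
  rwa [pre_zero] at this

lemma mlo_ge (a : Fin n → ℤ) (hc : ChgWord 2 a) : -2 ≤ mlo a := by
  have := le_mlo a hc (Nat.zero_le n)
  rw [pre_zero] at this; omega

lemma pre_eq_mid (a : Fin n → ℤ) (h1 : ∀ i, a i = 1 ∨ a i = -1) (hc : ChgWord 2 a)
    {j : ℕ} (hj : j ≤ n) (hpar : ¬ (2 : ℤ) ∣ ((j : ℤ) - mlo a)) :
    pre a j = mlo a + 1 := by
  have h2 := pre_parity a h1 j hj
  have h3 := mlo_le a hj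
  have h4 := le_mlo a hc hj
  omega

lemma det_all (a b : Fin n → ℤ) (ha1 : ∀ i, a i = 1 ∨ a i = -1)
    (hb1 : ∀ i, b i = 1 ∨ b i = -1) (hac : ChgWord 2 a) (hbc : ChgWord 2 b)
    (hm : mlo a = mlo b)
    (hs : ∀ j ≤ n, (2 : ℤ) ∣ ((j : ℤ) - mlo a) → pre a j = pre b j) : a = b := by
  have key : ∀ j ≤ n, pre a j = pre b j := by
    intro j hj
    by_cases hd : (2 : ℤ) ∣ ((j : ℤ) - mlo a)
    · exact hs j hj hd
    · rw [pre_eq_mid a ha1 hac hj hd, pre_eq_mid b hb1 hbc hj (by rw [← hm]; exact hd), hm]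
  funext k
  have h1 := key k (le_of_lt k.isLt)
  have h2 := key (k + 1) k.isLt
  have s1 := pre_succ a k.isLt
  have s2 := pre_succ b k.isLt
  simp only [Fin.eta] at s1 s2
  omega


lemma det_col (a b : Fin n → ℤ) (ha1 : ∀ i, a i = 1 ∨ a i = -1)
    (hb1 : ∀ i, b i = 1 ∨ b i = -1) (hac : ChgWord 2 a) (hbc : ChgWord 2 b)
    (hm : mlo a = mlo b) (hend : pre a n = pre b n)
    (hk : ∀ i : Fin n, (i : ℕ) % 2 = 0 → a i = b i) : a = b := by
  apply det_all a b ha1 hb1 hac hbc hm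
  intro j hj hd
  by_cases hme : (2 : ℤ) ∣ mlo a
  · rcases eq_or_lt_of_le hj with rfl | hjn
    · exact hend
    · have hj2 : j % 2 = 0 := by omega
      have hpar : ¬ (2 : ℤ) ∣ (((j + 1 : ℕ) : ℤ) - mlo a) := by push_cast; omega
      have e1 := pre_eq_mid a ha1 hac (show j + 1 ≤ n by omega) hpar
      have e2 := pre_eq_mid b hb1 hbc (show j + 1 ≤ n by omega) (by rw [← hm]; exact hpar)
      have s1 := pre_succ a hjn
      have s2 := pre_succ b hjn
      have hab := hk ⟨j, hjn⟩ hj2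
      simp only [hab] at s1
      rw [hm] at e1
      omega
  · obtain ⟨j, rfl⟩ : ∃ j', j = j' + 1 := by
      cases j with
      | zero => exfalso; simp at hd; omega
      | succ j => exact ⟨j, rfl⟩
    have hjn : j < n := by omega
    have hj2 : j % 2 = 0 := by omega
    have hpar : ¬ (2 : ℤ) ∣ ((j : ℤ) - mlo a) := by push_cast at hd ⊢; omega
    have e1 := pre_eq_mid a ha1 hac (show j ≤ n by omega) hpar
    have e2 := pre_eq_mid b hb1 hbc (show j ≤ n by omega) (by rw [← hm]; exact hpar)
    have s1 := pre_succ a hjn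
    have s2 := pre_succ b hjn
    have hab := hk ⟨j, hjn⟩ hj2
    simp only [hab] at s1
    rw [hm] at e1
    omega

def moff (a : Fin n → ℤ) : ℕ := if mlo a % 2 = 0 then 0 else 1

def rowData (a : Fin n → ℤ) : Fin 3 × (Fin ((n + 1) / 2 + 1) → Bool) :=
  (⟨(mlo a + 2).toNat % 3, Nat.mod_lt _ (by norm_num)⟩,
   fun k => decide (pre a (2 * (k : ℕ) + moff a) = mlo a + 2))

def colData (a : Fin n → ℤ) : Fin 3 × Bool :=
  (⟨(mlo a + 2).toNat % 3, Nat.mod_lt _ (by norm_num)⟩,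
   decide (pre a n = mlo a + 2))

lemma mlo_eq_of_code (a b : Fin n → ℤ) (hac : ChgWord 2 a) (hbc : ChgWord 2 b)
    (h : (mlo a + 2).toNat % 3 = (mlo b + 2).toNat % 3) : mlo a = mlo b := by
  have h1 := mlo_nonpos a
  have h2 := mlo_ge a hac
  have h3 := mlo_nonpos b
  have h4 := mlo_ge b hbc
  omega

lemma det_row (a b : Fin n → ℤ) (ha1 : ∀ i, a i = 1 ∨ a i = -1)
    (hb1 : ∀ i, b i = 1 ∨ b i = -1) (hac : ChgWord 2 a) (hbc : ChgWord 2 b)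
    (hd : rowData a = rowData b) : a = b := by
  rw [Prod.ext_iff] at hd
  obtain ⟨hd1, hd2⟩ := hd
  have hm : mlo a = mlo b :=
    mlo_eq_of_code a b hac hbc (congrArg Fin.val hd1)
  apply det_all a b ha1 hb1 hac hbc hm
  intro j hj hdvd
  have hoa : moff a = moff b := by unfold moff; rw [hm]
  have hjo : j % 2 = moff a := by
    unfold moff; split <;> rename_i hme <;> omega
  have hk : j / 2 < (n + 1) / 2 + 1 := by omega
  have hpos : 2 * (j / 2) + moff a = j := by omega
  have hbit := congrFun hd2 ⟨j / 2, hk⟩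
  simp only [rowData] at hbit
  have hiff := decide_eq_decide.1 hbit
  rw [hpos, ← hoa, hpos] at hiff
  have pa1 := mlo_le a hj
  have pa2 := le_mlo a hac hj
  have pb1 := mlo_le b hj
  have pb2 := le_mlo b hbc hj
  have par_a := pre_parity a ha1 j hj
  have par_b := pre_parity b hb1 j hj
  rw [← hm] at pb1 pb2
  by_cases hca : pre a j = mlo a + 2
  · have := hiff.1 hca; omega
  · have hcb : ¬ pre b j = mlo b + 2 := fun h => hca (hiff.2 h)
    omega

lemma det_col_data (a b : Fin n → ℤ) (ha1 : ∀ i, a i = 1 ∨ a i = -1)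
    (hb1 : ∀ i, b i = 1 ∨ b i = -1) (hac : ChgWord 2 a) (hbc : ChgWord 2 b)
    (hd : colData a = colData b)
    (hkn : ∀ i : Fin n, (i : ℕ) % 2 = 0 → a i = b i) : a = b := by
  rw [Prod.ext_iff] at hd
  obtain ⟨hd1, hd2⟩ := hd
  have hm : mlo a = mlo b :=
    mlo_eq_of_code a b hac hbc (congrArg Fin.val hd1)
  simp only [colData] at hd2
  have hiff := decide_eq_decide.1 hd2
  have hend : pre a n = pre b n := by
    by_cases hdn : (2 : ℤ) ∣ ((n : ℤ) - mlo a)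
    · have pa1 := mlo_le a (le_refl n)
      have pa2 := le_mlo a hac (le_refl n)
      have pb1 := mlo_le b (le_refl n)
      have pb2 := le_mlo b hbc (le_refl n)
      have par_a := pre_parity a ha1 n (le_refl n)
      have par_b := pre_parity b hb1 n (le_refl n)
      rw [← hm] at pb1 pb2
      by_cases hca : pre a n = mlo a + 2
      · have := hiff.1 hca; omega
      · have hcb : ¬ pre b n = mlo b + 2 := fun h => hca (hiff.2 h)
        omega
    · rw [pre_eq_mid a ha1 hac (le_refl n) hdn,
        pre_eq_mid b hb1 hbc (le_refl n) (by rw [← hm]; exact hdn), hm]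
  exact det_col a b ha1 hb1 hac hbc hm hend hkn


def mkRow (k : Fin ((n + 1) / 2)) : Fin n :=
  ⟨2 * (k : ℕ), by have := k.isLt; omega⟩

def enc (Γ : Fin n → Fin n → ℤ) :
    (Fin ((n + 1) / 2) → Fin 3 × (Fin ((n + 1) / 2 + 1) → Bool)) × (Fin n → Fin 3 × Bool) :=
  (fun k => rowData (fun j => Γ (mkRow k) j), fun j => colData (fun i => Γ i j))

lemma enc_inj (Γ Δ : Fin n → Fin n → ℤ)
    (hΓ1 : ∀ i j : Fin n, Γ i j = 1 ∨ Γ i j = -1)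
    (hΓr : ∀ i : Fin n, ChgWord 2 (fun j => Γ i j))
    (hΓc : ∀ j : Fin n, ChgWord 2 (fun i => Γ i j))
    (hΔ1 : ∀ i j : Fin n, Δ i j = 1 ∨ Δ i j = -1)
    (hΔr : ∀ i : Fin n, ChgWord 2 (fun j => Δ i j))
    (hΔc : ∀ j : Fin n, ChgWord 2 (fun i => Δ i j))
    (h : enc Γ = enc Δ) : Γ = Δ := by
  rw [Prod.ext_iff] at h
  obtain ⟨hrow, hcol⟩ := h
  simp only [enc] at hrow hcol
  have hrows : ∀ i : Fin n, (i : ℕ) % 2 = 0 → ∀ j, Γ i j = Δ i j := by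
    intro i hi
    have hk : (i : ℕ) / 2 < (n + 1) / 2 := by have := i.isLt; omega
    have hbit := congrFun hrow ⟨(i : ℕ) / 2, hk⟩
    have hre := det_row (fun j => Γ (mkRow ⟨(i : ℕ) / 2, hk⟩) j)
      (fun j => Δ (mkRow ⟨(i : ℕ) / 2, hk⟩) j)
      (fun j => hΓ1 _ j) (fun j => hΔ1 _ j) (hΓr _) (hΔr _) hbit
    have hri : mkRow (⟨(i : ℕ) / 2, hk⟩ : Fin ((n + 1) / 2)) = i := by
      apply Fin.ext; simp [mkRow]; omega
    rw [hri] at hre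
    exact fun j => congrFun hre j
  have hcols : ∀ j : Fin n, (fun i => Γ i j) = (fun i => Δ i j) := by
    intro j
    exact det_col_data _ _ (fun i => hΓ1 i j) (fun i => hΔ1 i j) (hΓc j) (hΔc j)
      (congrFun hcol j) (fun i hi => hrows i hi j)
  funext i j
  exact congrFun (hcols j) i

end S10

open S10 in
theorem stmt10_card_bound (n : ℕ) :
    Nat.card {Γ : Fin n → Fin n → ℤ //
        (∀ i j : Fin n, Γ i j = 1 ∨ Γ i j = -1) ∧
        (∀ i : Fin n, ChgWord 2 (fun j => Γ i j)) ∧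
        (∀ j : Fin n, ChgWord 2 (fun i => Γ i j))} ≤
      2 ^ (((n + 1) / 2 + 3) * ((n + 1) / 2) + 3 * n) := by
  set R := (n + 1) / 2 with hR
  have hinj : Function.Injective
      (fun Γ : {Γ : Fin n → Fin n → ℤ //
        (∀ i j : Fin n, Γ i j = 1 ∨ Γ i j = -1) ∧
        (∀ i : Fin n, ChgWord 2 (fun j => Γ i j)) ∧
        (∀ j : Fin n, ChgWord 2 (fun i => Γ i j))} => enc Γ.1) := by
    rintro ⟨Γ, hΓ1, hΓr, hΓc⟩ ⟨Δ, hΔ1, hΔr, hΔc⟩ h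
    exact Subtype.ext (enc_inj Γ Δ hΓ1 hΓr hΓc hΔ1 hΔr hΔc h)
  have h1 := Nat.card_le_card_of_injective _ hinj
  have h2 : Nat.card ((Fin R → Fin 3 × (Fin (R + 1) → Bool)) × (Fin n → Fin 3 × Bool))
      = (3 * 2 ^ (R + 1)) ^ R * (3 * 2) ^ n := by
    simp [Nat.card_eq_fintype_card]
  rw [h2] at h1
  refine h1.trans ?_
  have e1 : 3 * 2 ^ (R + 1) ≤ 2 ^ (R + 3) := by
    have h4 : (3 : ℕ) * 2 ^ (R + 1) ≤ 4 * 2 ^ (R + 1) :=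
      Nat.mul_le_mul_right _ (by norm_num)
    refine h4.trans_eq ?_
    rw [pow_add, pow_add]; ring
  have e2 : (3 * 2 ^ (R + 1)) ^ R * (3 * 2) ^ n ≤ (2 ^ (R + 3)) ^ R * (2 ^ 3) ^ n :=
    Nat.mul_le_mul (Nat.pow_le_pow_left e1 R) (Nat.pow_le_pow_left (by norm_num) n)
  refine e2.trans_eq ?_
  rw [← pow_mul, ← pow_mul, ← pow_add]

theorem stmt10_card_triv (n : ℕ) :
    Nat.card {Γ : Fin n → Fin n → ℤ //
        (∀ i j : Fin n, Γ i j = 1 ∨ Γ i j = -1) ∧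
        (∀ i : Fin n, ChgWord 2 (fun j => Γ i j)) ∧
        (∀ j : Fin n, ChgWord 2 (fun i => Γ i j))} ≤ 2 ^ (n * n) := by
  have hinj : Function.Injective
      (fun Γ : {Γ : Fin n → Fin n → ℤ //
        (∀ i j : Fin n, Γ i j = 1 ∨ Γ i j = -1) ∧
        (∀ i : Fin n, ChgWord 2 (fun j => Γ i j)) ∧
        (∀ j : Fin n, ChgWord 2 (fun i => Γ i j))} =>
        (fun i j => decide (Γ.1 i j = 1) : Fin n → Fin n → Bool)) := by
    rintro ⟨Γ, hΓ1, hx1, hx2⟩ ⟨Δ, hΔ1, hy1, hy2⟩ h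
    apply Subtype.ext
    funext i j
    show Γ i j = Δ i j
    have hb : decide (Γ i j = 1) = decide (Δ i j = 1) := congrFun (congrFun h i) j
    have := decide_eq_decide.1 hb
    rcases hΓ1 i j with h1 | h1 <;> rcases hΔ1 i j with h2 | h2 <;> omega
  have h1 := Nat.card_le_card_of_injective _ hinj
  have h2 : Nat.card (Fin n → Fin n → Bool) = 2 ^ (n * n) := by
    simp [Nat.card_eq_fintype_card, pow_mul]
  rw [h2] at h1
  exact h1
/-- For `n ≥ 2`, the number of `n × n` arrays over `{+1,-1}` with all rows and
columns in `CHG(2)` is at most `2^(2n) · 2^(n²/4 + n² - (n-2)²)`. -/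
theorem stmt10 (n : ℕ) (hn : 2 ≤ n) :
    (Nat.card {Γ : Fin n → Fin n → ℤ //
        (∀ i j : Fin n, Γ i j = 1 ∨ Γ i j = -1) ∧
        (∀ i : Fin n, ChgWord 2 (fun j => Γ i j)) ∧
        (∀ j : Fin n, ChgWord 2 (fun i => Γ i j))} : ℝ) ≤
      2 ^ (2 * n) *
        (2 : ℝ) ^ ((n : ℝ) ^ 2 / 4 + (n : ℝ) ^ 2 - ((n : ℝ) - 2) ^ 2) := by
  set x : ℝ := (n : ℝ) ^ 2 / 4 + (n : ℝ) ^ 2 - ((n : ℝ) - 2) ^ 2 with hxdef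
  have main : ∃ E : ℕ,
      Nat.card {Γ : Fin n → Fin n → ℤ //
        (∀ i j : Fin n, Γ i j = 1 ∨ Γ i j = -1) ∧
        (∀ i : Fin n, ChgWord 2 (fun j => Γ i j)) ∧
        (∀ j : Fin n, ChgWord 2 (fun i => Γ i j))} ≤ 2 ^ E ∧
      (E : ℝ) ≤ 2 * (n : ℝ) + x := by
    by_cases h7 : n ≤ 7
    · refine ⟨n * n, stmt10_card_triv n, ?_⟩
      have h2 : (2 : ℝ) ≤ (n : ℝ) := by exact_mod_cast hn
      have h7' : (n : ℝ) ≤ 7 := by exact_mod_cast h7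
      rw [hxdef]
      push_cast
      nlinarith [mul_nonneg (by linarith : (0:ℝ) ≤ (n:ℝ) - 2)
        (by linarith : (0:ℝ) ≤ 7 - (n:ℝ))]
    · refine ⟨((n + 1) / 2 + 3) * ((n + 1) / 2) + 3 * n, stmt10_card_bound n, ?_⟩
      have h8 : (8 : ℝ) ≤ (n : ℝ) := by exact_mod_cast (by omega : 8 ≤ n)
      have hRn : 2 * ((n + 1) / 2) ≤ n + 1 := by omega
      have hR : ((((n + 1) / 2 : ℕ)) : ℝ) ≤ ((n : ℝ) + 1) / 2 := by
        have h' : ((2 * ((n + 1) / 2) : ℕ) : ℝ) ≤ ((n + 1 : ℕ) : ℝ) := by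
          exact_mod_cast hRn
        push_cast at h'
        linarith
      have hR0 : (0 : ℝ) ≤ (((n + 1) / 2 : ℕ) : ℝ) := Nat.cast_nonneg _
      rw [hxdef]
      push_cast
      nlinarith [mul_nonneg
        (by linarith : (0:ℝ) ≤ ((n:ℝ)+1)/2 - (((n + 1) / 2 : ℕ) : ℝ))
        (by linarith : (0:ℝ) ≤ (((n + 1) / 2 : ℕ) : ℝ) + ((n:ℝ)+1)/2 + 3)]
  obtain ⟨E, h1, h2⟩ := main
  have c1 : (Nat.card {Γ : Fin n → Fin n → ℤ //
        (∀ i j : Fin n, Γ i j = 1 ∨ Γ i j = -1) ∧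
        (∀ i : Fin n, ChgWord 2 (fun j => Γ i j)) ∧
        (∀ j : Fin n, ChgWord 2 (fun i => Γ i j))} : ℝ) ≤ ((2 ^ E : ℕ) : ℝ) := by
    exact_mod_cast h1
  refine c1.trans ?_
  have e : ((2 * n : ℕ) : ℝ) = 2 * (n : ℝ) := by push_cast; ring
  calc ((2 ^ E : ℕ) : ℝ) = (2 : ℝ) ^ (E : ℝ) := by
        rw [Real.rpow_natCast]; push_cast; ring
    _ ≤ (2 : ℝ) ^ (2 * (n : ℝ) + x) :=
        Real.rpow_le_rpow_of_exponent_le one_le_two h2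
    _ = (2 : ℝ) ^ (((2 * n : ℕ) : ℝ) + x) := by rw [e]
    _ = (2 : ℝ) ^ (((2 * n : ℕ) : ℝ)) * (2 : ℝ) ^ x := Real.rpow_add two_pos _ _
    _ = 2 ^ (2 * n) * (2 : ℝ) ^ x := by rw [Real.rpow_natCast]
end
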